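/- arXiv:2508.12467 — 10 statements merged into one kernel-verified Lean document; each statement's English description precedes it below -/
import Mathlib

section
/- Let n ≥ 2 and 2 ≤ k ≤ n−1 be integers, and let p = p_1…p_{n−1} and q = q_1…q_{n−1} be words over the alphabet {N, C} such that p contains exactly k letters C and q contains exactly k−2 letters C. Then there exists an index i with 1 ≤ i ≤ n−1 such that both mixed words p_1…p_i q_{i+1}…q_{n−1} and q_1…q_i p_{i+1}…p_{n−1} contain exactly k−1 letters C; equivalently, |{r ≤ i : p_r = C}| + |{r > i : q_r = C}| = k−1 and |{r ≤ i : q_r = C}| + |{r > i : p_r = C}| = k−1. -/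
/-- **Existence of a crossing index for the path injection.** Words of length `n−1` over the
alphabet `{N, C}` are encoded as Boolean functions on positions `1,…,n−1` (`true` = letter `C`).
If `p` contains exactly `k` letters `C` and `q` contains exactly `k−2` letters `C`
(with `2 ≤ k ≤ n−1`), then there is an index `1 ≤ i ≤ n−1` such that both mixed words
`p₁…p_i q_{i+1}…q_{n−1}` and `q₁…q_i p_{i+1}…p_{n−1}` contain exactly `k−1` letters `C`. -/
theorem exists_switch_index (n k : ℕ) (hn : 2 ≤ n) (hk2 : 2 ≤ k) (hkn : k ≤ n - 1)
    (p q : ℕ → Bool)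
    (hp : ((Finset.Icc 1 (n - 1)).filter (fun r => p r = true)).card = k)
    (hq : ((Finset.Icc 1 (n - 1)).filter (fun r => q r = true)).card = k - 2) :
    ∃ i : ℕ, 1 ≤ i ∧ i ≤ n - 1 ∧
      ((Finset.Icc 1 i).filter (fun r => p r = true)).card +
        ((Finset.Icc (i + 1) (n - 1)).filter (fun r => q r = true)).card = k - 1 ∧
      ((Finset.Icc 1 i).filter (fun r => q r = true)).card +
        ((Finset.Icc (i + 1) (n - 1)).filter (fun r => p r = true)).card = k - 1 := by
  set m := n - 1 with hm
  -- splitting lemma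
  have hsplit : ∀ (f : ℕ → Bool) (i : ℕ), i ≤ m →
      ((Finset.Icc 1 i).filter (fun r => f r = true)).card +
        ((Finset.Icc (i + 1) m).filter (fun r => f r = true)).card =
      ((Finset.Icc 1 m).filter (fun r => f r = true)).card := by
    intro f i hi
    have hu : Finset.Icc 1 i ∪ Finset.Icc (i + 1) m = Finset.Icc 1 m := by
      ext x
      simp only [Finset.mem_union, Finset.mem_Icc]
      omega
    rw [← Finset.card_union_of_disjoint, ← Finset.filter_union, hu]
    · rw [Finset.disjoint_left]
      intro x hx hx'
      simp only [Finset.mem_filter, Finset.mem_Icc] at hx hx'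
      omega
  -- step bound: count over Icc 1 (i+1) ≤ count over Icc 1 i + 1
  have hstep : ∀ (f : ℕ → Bool) (i : ℕ),
      ((Finset.Icc 1 (i + 1)).filter (fun r => f r = true)).card ≤
        ((Finset.Icc 1 i).filter (fun r => f r = true)).card + 1 := by
    intro f i
    have hsub : (Finset.Icc 1 (i + 1)).filter (fun r => f r = true) ⊆
        insert (i + 1) ((Finset.Icc 1 i).filter (fun r => f r = true)) := by
      intro x hx
      simp only [Finset.mem_filter, Finset.mem_Icc, Finset.mem_insert] at hx ⊢
      obtain ⟨⟨h1, h2⟩, h3⟩ := hx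
      rcases Nat.lt_or_ge x (i + 1) with hlt | hge
      · exact Or.inr ⟨⟨h1, by omega⟩, h3⟩
      · exact Or.inl (by omega)
    calc ((Finset.Icc 1 (i + 1)).filter (fun r => f r = true)).card
        ≤ _ := Finset.card_le_card hsub
      _ ≤ _ + 1 := Finset.card_insert_le _ _
  -- monotonicity
  have hmono : ∀ (f : ℕ → Bool) (i : ℕ),
      ((Finset.Icc 1 i).filter (fun r => f r = true)).card ≤
        ((Finset.Icc 1 (i + 1)).filter (fun r => f r = true)).card := by
    intro f i
    exact Finset.card_le_card (Finset.filter_subset_filter _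
      (Finset.Icc_subset_Icc_right (by omega)))
  set F : ℕ → ℤ := fun i =>
    (((Finset.Icc 1 i).filter (fun r => p r = true)).card : ℤ) -
      ((Finset.Icc 1 i).filter (fun r => q r = true)).card with hF
  have hFstep : ∀ i, F (i + 1) ≤ F i + 1 := by
    intro i
    have h1 := hstep p i
    have h2 := hmono q i
    simp only [hF]
    push_cast
    omega
  have hF0 : F 0 = 0 := by simp [hF]
  have hFm : F m = 2 := by
    simp only [hF, hp, hq]
    omega
  have hex : ∃ i, 1 ≤ F i := ⟨m, by omega⟩
  obtain ⟨i, hFi, hmin⟩ : ∃ i, 1 ≤ F i ∧ ∀ j < i, ¬ 1 ≤ F j :=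
    ⟨Nat.find hex, Nat.find_spec hex, fun j hj => Nat.find_min hex hj⟩
  have him : i ≤ m := by
    by_contra hc
    exact hmin m (by omega) (by omega)
  have hi1 : 1 ≤ i := by
    rcases Nat.eq_zero_or_pos i with h0 | h0
    · rw [h0] at hFi; omega
    · exact h0
  have hFi1 : F i = 1 := by
    obtain ⟨j, hj⟩ : ∃ j, i = j + 1 := ⟨i - 1, by omega⟩
    have hj' : ¬ (1 ≤ F j) := hmin j (by omega)
    have hs := hFstep j
    rw [← hj] at hs
    omega
  have hsg := hsplit p i him
  have hsh := hsplit q i him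
  rw [hp] at hsg
  rw [hq] at hsh
  have hgi : (((Finset.Icc 1 i).filter (fun r => p r = true)).card : ℤ) -
      ((Finset.Icc 1 i).filter (fun r => q r = true)).card = 1 := hFi1
  refine ⟨i, hi1, him, ?_, ?_⟩ <;> omega
end

section
/- The Legendre–Stirling numbers, defined by LS(0,0) = 1, LS(n,k) = 0 for n < 0, k < 0 or k > n, and LS(n,k) = (k^2 + k)·LS(n−1,k) + LS(n−1,k−1) for n ≥ 1 and 0 ≤ k ≤ n, are log-concave in k for every fixed n: LS(n,k)^2 ≥ LS(n,k−1)·LS(n,k+1) for all k. -/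
set_option maxHeartbeats 2000000

/-- `Fk k = k² + k`, the coefficient in the Legendre–Stirling recurrence. -/
def Fk (j : ℤ) : ℝ := (j : ℝ) ^ 2 + (j : ℝ)

lemma Fk_nonneg (j : ℤ) : 0 ≤ Fk j := by
  unfold Fk
  rcases le_or_gt 0 j with h | h
  · have h' : (0 : ℝ) ≤ (j : ℝ) := by exact_mod_cast h
    nlinarith
  · have h2 : j ≤ -1 := by omega
    have h' : (j : ℝ) ≤ -1 := by exact_mod_cast h2
    nlinarith

lemma Fk_pos (j : ℤ) (h : 1 ≤ j) : 0 < Fk j := by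
  unfold Fk
  have h' : (1 : ℝ) ≤ (j : ℝ) := by exact_mod_cast h
  nlinarith

/-- **Log-concavity of the Legendre–Stirling numbers.** The array defined by `LS(0,0) = 1`,
`LS(n,k) = 0` for `n < 0`, `k < 0` or `k > n`, and
`LS(n,k) = (k² + k)·LS(n−1,k) + LS(n−1,k−1)` for `n ≥ 1`, `0 ≤ k ≤ n`, is log-concave in `k`
for every fixed `n`. -/
theorem legendre_stirling_log_concave
    (LS : ℤ → ℤ → ℝ)
    (hLS1 : LS 0 0 = 1)
    (hLS0 : ∀ n k : ℤ, (n < 0 ∨ k < 0 ∨ n < k) → LS n k = 0)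
    (hrec : ∀ n k : ℤ, 1 ≤ n → 0 ≤ k → k ≤ n →
      LS n k = ((k : ℝ) ^ 2 + (k : ℝ)) * LS (n - 1) k + LS (n - 1) (k - 1)) :
    ∀ n k : ℤ, LS n (k - 1) * LS n (k + 1) ≤ (LS n k) ^ 2 := by
  -- the recurrence holds for ALL k ∈ ℤ when n ≥ 1
  have hrec' : ∀ n k : ℤ, 1 ≤ n → LS n k = Fk k * LS (n - 1) k + LS (n - 1) (k - 1) := by
    intro n k hn
    rcases lt_or_ge k 0 with hk | hk
    · rw [hLS0 n k (Or.inr (Or.inl hk)), hLS0 (n - 1) k (Or.inr (Or.inl hk)),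
        hLS0 (n - 1) (k - 1) (Or.inr (Or.inl (by omega)))]
      ring
    · rcases le_or_gt k n with hkn | hkn
      · have h := hrec n k hn hk hkn
        unfold Fk
        exact h
      · rw [hLS0 n k (Or.inr (Or.inr hkn)), hLS0 (n - 1) k (Or.inr (Or.inr (by omega))),
          hLS0 (n - 1) (k - 1) (Or.inr (Or.inr (by omega)))]
        ring
  have h00 : ∀ m : ℤ, 1 ≤ m → LS m 0 = 0 := by
    intro m hm
    rw [hrec' m 0 hm, hLS0 (m - 1) (0 - 1) (Or.inr (Or.inl (by norm_num)))]
    simp [Fk]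
  -- positivity inside the triangle
  have pos : ∀ n : ℤ, 1 ≤ n → ∀ k : ℤ, 1 ≤ k → k ≤ n → 0 < LS n k := by
    have base : ∀ k : ℤ, 1 ≤ k → k ≤ 1 → 0 < LS 1 k := by
      intro k hk1 hk2
      have hk : k = 1 := by omega
      subst hk
      rw [hrec' 1 1 le_rfl, show (1:ℤ) - 1 = 0 by norm_num,
        hLS0 0 1 (Or.inr (Or.inr (by norm_num))), hLS1]
      norm_num
    have step : ∀ n : ℤ, 1 ≤ n → (∀ k : ℤ, 1 ≤ k → k ≤ n → 0 < LS n k) →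
        ∀ k : ℤ, 1 ≤ k → k ≤ n + 1 → 0 < LS (n + 1) k := by
      intro n hn ih k hk1 hkn
      have hr : LS (n + 1) k = Fk k * LS n k + LS n (k - 1) := by
        have h := hrec' (n + 1) k (by omega)
        rwa [show n + 1 - 1 = n by ring] at h
      rw [hr]
      rcases eq_or_lt_of_le hk1 with h1 | h1
      · -- k = 1
        rw [← h1, show (1:ℤ) - 1 = 0 by norm_num, h00 n hn]
        have := ih 1 le_rfl hn
        have hf := Fk_pos 1 le_rfl
        nlinarith
      · -- 2 ≤ k
        rcases le_or_gt k n with h2 | h2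
        · have hc := ih k (by omega) h2
          have hb := ih (k - 1) (by omega) (by omega)
          have := mul_nonneg (Fk_nonneg k) hc.le
          linarith
        · have hkn1 : n < k := h2
          rw [hLS0 n k (Or.inr (Or.inr hkn1))]
          have hb := ih (k - 1) (by omega) (by omega)
          nlinarith
    exact fun n hn => Int.le_induction base step n hn
  -- nonnegativity everywhere
  have nonneg : ∀ n k : ℤ, 0 ≤ LS n k := by
    intro n k
    rcases lt_or_ge n 0 with h | h
    · rw [hLS0 n k (Or.inl h)]
    rcases lt_or_ge k 0 with h2 | h2
    · rw [hLS0 n k (Or.inr (Or.inl h2))]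
    rcases lt_or_ge n k with h3 | h3
    · rw [hLS0 n k (Or.inr (Or.inr h3))]
    rcases eq_or_lt_of_le h2 with h4 | h4
    · -- k = 0
      rcases eq_or_lt_of_le h with h5 | h5
      · rw [← h4, ← h5, hLS1]; norm_num
      · rw [← h4, h00 n (by omega)]
    · exact (pos n (by omega) k (by omega) h3).le
  -- Main simultaneous induction:
  --   A n k : LS n (k-1) * LS n (k+1) ≤ LS n k ^ 2                     (log-concavity)
  --   V n k : Fk (k+1) * (LS n (k-1) * LS n (k+1)) ≤ Fk k * LS n k ^ 2
  --   W n k : Fk (k-1) * Fk (k+1) * (LS n (k-1) * LS n (k+1)) + 2 * (LS n (k-1) * LS n k)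
  --             ≤ Fk k ^ 2 * LS n k ^ 2
  have main : ∀ n : ℤ, 0 ≤ n →
      (∀ k : ℤ, LS n (k - 1) * LS n (k + 1) ≤ LS n k ^ 2) ∧
      (∀ k : ℤ, Fk (k + 1) * (LS n (k - 1) * LS n (k + 1)) ≤ Fk k * LS n k ^ 2) ∧
      (∀ k : ℤ, Fk (k - 1) * Fk (k + 1) * (LS n (k - 1) * LS n (k + 1))
          + 2 * (LS n (k - 1) * LS n k) ≤ Fk k ^ 2 * LS n k ^ 2) := by
    have base0 : (∀ k : ℤ, LS 0 (k - 1) * LS 0 (k + 1) ≤ LS 0 k ^ 2) ∧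
        (∀ k : ℤ, Fk (k + 1) * (LS 0 (k - 1) * LS 0 (k + 1)) ≤ Fk k * LS 0 k ^ 2) ∧
        (∀ k : ℤ, Fk (k - 1) * Fk (k + 1) * (LS 0 (k - 1) * LS 0 (k + 1))
            + 2 * (LS 0 (k - 1) * LS 0 k) ≤ Fk k ^ 2 * LS 0 k ^ 2) := by
      have zero0 : ∀ j : ℤ, j ≠ 0 → LS 0 j = 0 := by
        intro j hj
        rcases lt_or_gt_of_ne hj with h | h
        · exact hLS0 _ _ (Or.inr (Or.inl h))
        · exact hLS0 _ _ (Or.inr (Or.inr h))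
      have prod0 : ∀ i j : ℤ, i ≠ j → LS 0 i * LS 0 j = 0 := by
        intro i j hij
        by_cases hi : i = 0
        · rw [zero0 j (by omega), mul_zero]
        · rw [zero0 i hi, zero_mul]
      refine ⟨?_, ?_, ?_⟩
      · intro k
        rw [prod0 (k - 1) (k + 1) (by omega)]
        positivity
      · intro k
        rw [prod0 (k - 1) (k + 1) (by omega), mul_zero]
        exact mul_nonneg (Fk_nonneg k) (sq_nonneg _)
      · intro k
        rw [prod0 (k - 1) (k + 1) (by omega), prod0 (k - 1) k (by omega), mul_zero, mul_zero]
        have := mul_nonneg (sq_nonneg (Fk k)) (sq_nonneg (LS 0 k))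
        linarith
    have step0 : ∀ n : ℤ, 0 ≤ n →
        ((∀ k : ℤ, LS n (k - 1) * LS n (k + 1) ≤ LS n k ^ 2) ∧
         (∀ k : ℤ, Fk (k + 1) * (LS n (k - 1) * LS n (k + 1)) ≤ Fk k * LS n k ^ 2) ∧
         (∀ k : ℤ, Fk (k - 1) * Fk (k + 1) * (LS n (k - 1) * LS n (k + 1))
             + 2 * (LS n (k - 1) * LS n k) ≤ Fk k ^ 2 * LS n k ^ 2)) →
        ((∀ k : ℤ, LS (n + 1) (k - 1) * LS (n + 1) (k + 1) ≤ LS (n + 1) k ^ 2) ∧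
         (∀ k : ℤ, Fk (k + 1) * (LS (n + 1) (k - 1) * LS (n + 1) (k + 1))
             ≤ Fk k * LS (n + 1) k ^ 2) ∧
         (∀ k : ℤ, Fk (k - 1) * Fk (k + 1) * (LS (n + 1) (k - 1) * LS (n + 1) (k + 1))
             + 2 * (LS (n + 1) (k - 1) * LS (n + 1) k) ≤ Fk k ^ 2 * LS (n + 1) k ^ 2)) := by
      intro n hn ih
      obtain ⟨ihA, ihV, ihW⟩ := ih
      -- derived fact X (cross) for row n
      have ihX : ∀ k : ℤ, LS n (k - 2) * LS n (k + 1) ≤ LS n (k - 1) * LS n k := by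
        intro k
        rcases (nonneg n (k - 2)).eq_or_lt with ha | ha
        · rw [← ha, zero_mul]
          exact mul_nonneg (nonneg n (k - 1)) (nonneg n k)
        rcases (nonneg n (k + 1)).eq_or_lt with hd | hd
        · rw [← hd, mul_zero]
          exact mul_nonneg (nonneg n (k - 1)) (nonneg n k)
        have hk2 : 0 ≤ k - 2 := by
          by_contra h
          rw [hLS0 n (k - 2) (Or.inr (Or.inl (by omega)))] at ha
          exact lt_irrefl 0 ha
        have hkn : k + 1 ≤ n := by
          by_contra h
          rw [hLS0 n (k + 1) (Or.inr (Or.inr (by omega)))] at hd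
          exact lt_irrefl 0 hd
        have hb := pos n (by omega) (k - 1) (by omega) (by omega)
        have hc := pos n (by omega) k (by omega) (by omega)
        have h1 : LS n (k - 2) * LS n k ≤ LS n (k - 1) ^ 2 := by
          have h := ihA (k - 1)
          rwa [show k - 1 - 1 = k - 2 by ring, show k - 1 + 1 = k by ring] at h
        have h2 : LS n (k - 1) * LS n (k + 1) ≤ LS n k ^ 2 := ihA k
        have key : (LS n (k - 2) * LS n (k + 1)) * (LS n (k - 1) * LS n k)
            ≤ (LS n (k - 1) * LS n k) * (LS n (k - 1) * LS n k) := by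
          calc (LS n (k - 2) * LS n (k + 1)) * (LS n (k - 1) * LS n k)
              = (LS n (k - 2) * LS n k) * (LS n (k - 1) * LS n (k + 1)) := by ring
            _ ≤ LS n (k - 1) ^ 2 * LS n k ^ 2 := by
                exact mul_le_mul h1 h2
                  (mul_nonneg (nonneg n (k - 1)) (nonneg n (k + 1))) (sq_nonneg _)
            _ = (LS n (k - 1) * LS n k) * (LS n (k - 1) * LS n k) := by ring
        exact le_of_mul_le_mul_right key (mul_pos hb hc)
      -- derived fact Q for row n
      have ihQ : ∀ k : ℤ, Fk (k + 1) ^ 2 * (LS n (k - 2) * LS n (k + 1))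
          ≤ Fk k * (Fk k + 2) * (LS n (k - 1) * LS n k) := by
        intro k
        have hRHSnn : 0 ≤ Fk k * (Fk k + 2) * (LS n (k - 1) * LS n k) := by
          have := Fk_nonneg k
          exact mul_nonneg (mul_nonneg this (by linarith))
            (mul_nonneg (nonneg n (k - 1)) (nonneg n k))
        rcases (nonneg n (k - 2)).eq_or_lt with ha | ha
        · rw [← ha, zero_mul, mul_zero]; exact hRHSnn
        rcases (nonneg n (k + 1)).eq_or_lt with hd | hd
        · rw [← hd, mul_zero, mul_zero]; exact hRHSnn
        have hk2 : 0 ≤ k - 2 := by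
          by_contra h
          rw [hLS0 n (k - 2) (Or.inr (Or.inl (by omega)))] at ha
          exact lt_irrefl 0 ha
        have hkn : k + 1 ≤ n := by
          by_contra h
          rw [hLS0 n (k + 1) (Or.inr (Or.inr (by omega)))] at hd
          exact lt_irrefl 0 hd
        have hb := pos n (by omega) (k - 1) (by omega) (by omega)
        have hc := pos n (by omega) k (by omega) (by omega)
        have h1 : Fk (k + 1) * (LS n (k - 1) * LS n (k + 1)) ≤ Fk k * LS n k ^ 2 := ihV k
        have h2 : Fk k * (LS n (k - 2) * LS n k) ≤ Fk (k - 1) * LS n (k - 1) ^ 2 := by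
          have h := ihV (k - 1)
          rwa [show k - 1 + 1 = k by ring, show k - 1 - 1 = k - 2 by ring] at h
        have hdiff : Fk k * (Fk k + 2) - Fk (k - 1) * Fk (k + 1) = 4 * Fk k := by
          simp only [Fk]; push_cast; ring
        have key : (Fk (k + 1) ^ 2 * (LS n (k - 2) * LS n (k + 1))) * (LS n (k - 1) * LS n k)
            ≤ (Fk k * (Fk k + 2) * (LS n (k - 1) * LS n k)) * (LS n (k - 1) * LS n k) := by
          calc (Fk (k + 1) ^ 2 * (LS n (k - 2) * LS n (k + 1))) * (LS n (k - 1) * LS n k)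
              = (Fk (k + 1) * (LS n (k - 1) * LS n (k + 1)))
                  * (Fk (k + 1) * (LS n (k - 2) * LS n k)) := by ring
            _ ≤ (Fk k * LS n k ^ 2) * (Fk (k + 1) * (LS n (k - 2) * LS n k)) := by
                exact mul_le_mul_of_nonneg_right h1
                  (mul_nonneg (Fk_nonneg _) (mul_nonneg (nonneg n (k - 2)) (nonneg n k)))
            _ = (Fk k * (LS n (k - 2) * LS n k)) * (Fk (k + 1) * LS n k ^ 2) := by ring
            _ ≤ (Fk (k - 1) * LS n (k - 1) ^ 2) * (Fk (k + 1) * LS n k ^ 2) := by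
                exact mul_le_mul_of_nonneg_right h2
                  (mul_nonneg (Fk_nonneg _) (sq_nonneg _))
            _ = Fk (k - 1) * Fk (k + 1) * (LS n (k - 1) * LS n k) ^ 2 := by ring
            _ ≤ Fk k * (Fk k + 2) * (LS n (k - 1) * LS n k) ^ 2 := by
                have h4 := Fk_nonneg k
                nlinarith [sq_nonneg (LS n (k - 1) * LS n k)]
            _ = (Fk k * (Fk k + 2) * (LS n (k - 1) * LS n k)) * (LS n (k - 1) * LS n k) := by
                ring
        exact le_of_mul_le_mul_right key (mul_pos hb hc)
      -- row n+1 recurrence equations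
      have hr : ∀ j : ℤ, LS (n + 1) j = Fk j * LS n j + LS n (j - 1) := by
        intro j
        have h := hrec' (n + 1) j (by omega)
        rwa [show n + 1 - 1 = n by ring] at h
      refine ⟨?_, ?_, ?_⟩
      -- A at row n+1
      · intro k
        have e1 : LS (n + 1) (k - 1) = Fk (k - 1) * LS n (k - 1) + LS n (k - 2) := by
          rw [hr (k - 1), show k - 1 - 1 = k - 2 by ring]
        have e2 : LS (n + 1) k = Fk k * LS n k + LS n (k - 1) := hr k
        have e3 : LS (n + 1) (k + 1) = Fk (k + 1) * LS n (k + 1) + LS n k := by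
          rw [hr (k + 1), show k + 1 - 1 = k by ring]
        rw [e1, e2, e3]
        have hA2 : LS n (k - 2) * LS n k ≤ LS n (k - 1) ^ 2 := by
          have h := ihA (k - 1)
          rwa [show k - 1 - 1 = k - 2 by ring, show k - 1 + 1 = k by ring] at h
        have hX : LS n (k - 2) * LS n (k + 1) ≤ LS n (k - 1) * LS n k := ihX k
        have hW : Fk (k - 1) * Fk (k + 1) * (LS n (k - 1) * LS n (k + 1))
            + 2 * (LS n (k - 1) * LS n k) ≤ Fk k ^ 2 * LS n k ^ 2 := ihW k
        have hXm : 0 ≤ Fk (k + 1) * (LS n (k - 1) * LS n k - LS n (k - 2) * LS n (k + 1)) :=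
          mul_nonneg (Fk_nonneg _) (by linarith)
        have key : (Fk k * LS n k + LS n (k - 1)) ^ 2
            - (Fk (k - 1) * LS n (k - 1) + LS n (k - 2))
              * (Fk (k + 1) * LS n (k + 1) + LS n k)
            = (LS n (k - 1) ^ 2 - LS n (k - 2) * LS n k)
              + Fk (k + 1) * (LS n (k - 1) * LS n k - LS n (k - 2) * LS n (k + 1))
              + (Fk k ^ 2 * LS n k ^ 2
                  - (Fk (k - 1) * Fk (k + 1) * (LS n (k - 1) * LS n (k + 1))
                    + 2 * (LS n (k - 1) * LS n k))) := by
          simp only [Fk]; push_cast; ring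
        nlinarith [key, hA2, hXm, hW]
      -- V at row n+1
      · intro k
        rcases lt_or_ge k 1 with hk | hk
        · -- k ≤ 0 : trivial
          rw [hLS0 (n + 1) (k - 1) (Or.inr (Or.inl (by omega))), zero_mul, mul_zero]
          exact mul_nonneg (Fk_nonneg k) (sq_nonneg _)
        · have e1 : LS (n + 1) (k - 1) = Fk (k - 1) * LS n (k - 1) + LS n (k - 2) := by
            rw [hr (k - 1), show k - 1 - 1 = k - 2 by ring]
          have e2 : LS (n + 1) k = Fk k * LS n k + LS n (k - 1) := hr k
          have e3 : LS (n + 1) (k + 1) = Fk (k + 1) * LS n (k + 1) + LS n k := by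
            rw [hr (k + 1), show k + 1 - 1 = k by ring]
          rw [e1, e2, e3]
          have hV1 : Fk (k + 1) * (LS n (k - 1) * LS n (k + 1)) ≤ Fk k * LS n k ^ 2 := ihV k
          have hV2 : Fk k * (LS n (k - 2) * LS n k) ≤ Fk (k - 1) * LS n (k - 1) ^ 2 := by
            have h := ihV (k - 1)
            rwa [show k - 1 + 1 = k by ring, show k - 1 - 1 = k - 2 by ring] at h
          have hQ : Fk (k + 1) ^ 2 * (LS n (k - 2) * LS n (k + 1))
              ≤ Fk k * (Fk k + 2) * (LS n (k - 1) * LS n k) := ihQ k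
          have hFp := Fk_pos k hk
          -- identity : Fk k * (goal difference) = sum of nonnegative terms
          have key : Fk k * (Fk k * (Fk k * LS n k + LS n (k - 1)) ^ 2
                - Fk (k + 1) * ((Fk (k - 1) * LS n (k - 1) + LS n (k - 2))
                  * (Fk (k + 1) * LS n (k + 1) + LS n k)))
              = Fk k * Fk (k - 1) * Fk (k + 1)
                  * (Fk k * LS n k ^ 2 - Fk (k + 1) * (LS n (k - 1) * LS n (k + 1)))
                + Fk (k + 1) * (Fk (k - 1) * LS n (k - 1) ^ 2 - Fk k * (LS n (k - 2) * LS n k))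
                + Fk k * (Fk k * (Fk k + 2) * (LS n (k - 1) * LS n k)
                    - Fk (k + 1) ^ 2 * (LS n (k - 2) * LS n (k + 1)))
                + 2 * Fk k ^ 3 * LS n k ^ 2 + 2 * Fk k * LS n (k - 1) ^ 2 := by
            simp only [Fk]; push_cast; ring
          have t1 : 0 ≤ Fk k * Fk (k - 1) * Fk (k + 1)
              * (Fk k * LS n k ^ 2 - Fk (k + 1) * (LS n (k - 1) * LS n (k + 1)))  := by
            refine mul_nonneg ?_ (by linarith)
            exact mul_nonneg (mul_nonneg (Fk_nonneg _) (Fk_nonneg _)) (Fk_nonneg _)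
          have t2 : 0 ≤ Fk (k + 1)
              * (Fk (k - 1) * LS n (k - 1) ^ 2 - Fk k * (LS n (k - 2) * LS n k)) :=
            mul_nonneg (Fk_nonneg _) (by linarith)
          have t3 : 0 ≤ Fk k * (Fk k * (Fk k + 2) * (LS n (k - 1) * LS n k)
              - Fk (k + 1) ^ 2 * (LS n (k - 2) * LS n (k + 1))) :=
            mul_nonneg (Fk_nonneg _) (by linarith)
          have t4 : 0 ≤ 2 * Fk k ^ 3 * LS n k ^ 2 := by
            have := Fk_nonneg k
            positivity
          have t5 : 0 ≤ 2 * Fk k * LS n (k - 1) ^ 2 := by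
            have := Fk_nonneg k
            positivity
          have hFD : 0 ≤ Fk k * (Fk k * (Fk k * LS n k + LS n (k - 1)) ^ 2
                - Fk (k + 1) * ((Fk (k - 1) * LS n (k - 1) + LS n (k - 2))
                  * (Fk (k + 1) * LS n (k + 1) + LS n k))) := by
            rw [key]; linarith
          nlinarith [hFD, hFp]
      -- W at row n+1
      · intro k
        rcases lt_or_ge k 1 with hk | hk
        · -- k ≤ 0 : trivial
          rw [hLS0 (n + 1) (k - 1) (Or.inr (Or.inl (by omega))), zero_mul, zero_mul,
            mul_zero, mul_zero]
          have := mul_nonneg (sq_nonneg (Fk k)) (sq_nonneg (LS (n + 1) k))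
          linarith
        · have e1 : LS (n + 1) (k - 1) = Fk (k - 1) * LS n (k - 1) + LS n (k - 2) := by
            rw [hr (k - 1), show k - 1 - 1 = k - 2 by ring]
          have e2 : LS (n + 1) k = Fk k * LS n k + LS n (k - 1) := hr k
          have e3 : LS (n + 1) (k + 1) = Fk (k + 1) * LS n (k + 1) + LS n k := by
            rw [hr (k + 1), show k + 1 - 1 = k by ring]
          rw [e1, e2, e3]
          have hA1 : LS n (k - 1) * LS n (k + 1) ≤ LS n k ^ 2 := ihA k
          have hA2 : LS n (k - 2) * LS n k ≤ LS n (k - 1) ^ 2 := by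
            have h := ihA (k - 1)
            rwa [show k - 1 - 1 = k - 2 by ring, show k - 1 + 1 = k by ring] at h
          have hX : LS n (k - 2) * LS n (k + 1) ≤ LS n (k - 1) * LS n k := ihX k
          have hV2 : Fk k * (LS n (k - 2) * LS n k) ≤ Fk (k - 1) * LS n (k - 1) ^ 2 := by
            have h := ihV (k - 1)
            rwa [show k - 1 + 1 = k by ring, show k - 1 - 1 = k - 2 by ring] at h
          have hW2 : Fk (k - 2) * Fk k * (LS n (k - 2) * LS n k)
              + 2 * (LS n (k - 2) * LS n (k - 1)) ≤ Fk (k - 1) ^ 2 * LS n (k - 1) ^ 2 := by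
            have h := ihW (k - 1)
            rwa [show k - 1 - 1 = k - 2 by ring, show k - 1 + 1 = k by ring] at h
          have hk1 : (1 : ℝ) ≤ (k : ℝ) := by exact_mod_cast hk
          have key : Fk k ^ 2 * (Fk k * LS n k + LS n (k - 1)) ^ 2
              - Fk (k - 1) * Fk (k + 1) * ((Fk (k - 1) * LS n (k - 1) + LS n (k - 2))
                  * (Fk (k + 1) * LS n (k + 1) + LS n k))
              - 2 * ((Fk (k - 1) * LS n (k - 1) + LS n (k - 2))
                  * (Fk k * LS n k + LS n (k - 1)))
              = Fk (k - 1) ^ 2 * Fk (k + 1) ^ 2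
                  * (LS n k ^ 2 - LS n (k - 1) * LS n (k + 1))
                + 2 * (k : ℝ) * Fk k * (LS n (k - 1) ^ 2 - LS n (k - 2) * LS n k)
                + Fk (k - 1) * Fk (k + 1) ^ 2
                  * (LS n (k - 1) * LS n k - LS n (k - 2) * LS n (k + 1))
                + (2 * (k : ℝ) - 2)
                  * (Fk (k - 1) * LS n (k - 1) ^ 2 - Fk k * (LS n (k - 2) * LS n k))
                + (Fk (k - 1) ^ 2 * LS n (k - 1) ^ 2
                    - (Fk (k - 2) * Fk k * (LS n (k - 2) * LS n k)
                      + 2 * (LS n (k - 2) * LS n (k - 1))))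
                + 2 * Fk k * (Fk k ^ 2 + Fk (k - 1) * Fk (k + 1)) * LS n k ^ 2
                + (4 * (k : ℝ) + 4) * Fk k * (LS n (k - 1) * LS n k) := by
            simp only [Fk]; push_cast; ring
          have u1 : 0 ≤ Fk (k - 1) ^ 2 * Fk (k + 1) ^ 2
              * (LS n k ^ 2 - LS n (k - 1) * LS n (k + 1)) :=
            mul_nonneg (mul_nonneg (sq_nonneg _) (sq_nonneg _)) (by linarith)
          have u2 : 0 ≤ 2 * (k : ℝ) * Fk k * (LS n (k - 1) ^ 2 - LS n (k - 2) * LS n k) :=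
            mul_nonneg (mul_nonneg (by linarith) (Fk_nonneg _)) (by linarith)
          have u3 : 0 ≤ Fk (k - 1) * Fk (k + 1) ^ 2
              * (LS n (k - 1) * LS n k - LS n (k - 2) * LS n (k + 1)) :=
            mul_nonneg (mul_nonneg (Fk_nonneg _) (sq_nonneg _)) (by linarith)
          have u4 : 0 ≤ (2 * (k : ℝ) - 2)
              * (Fk (k - 1) * LS n (k - 1) ^ 2 - Fk k * (LS n (k - 2) * LS n k)) :=
            mul_nonneg (by linarith) (by linarith)
          have u5 : 0 ≤ Fk (k - 1) ^ 2 * LS n (k - 1) ^ 2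
              - (Fk (k - 2) * Fk k * (LS n (k - 2) * LS n k)
                + 2 * (LS n (k - 2) * LS n (k - 1))) := by linarith
          have u6 : 0 ≤ 2 * Fk k * (Fk k ^ 2 + Fk (k - 1) * Fk (k + 1)) * LS n k ^ 2 := by
            have h1 := Fk_nonneg k
            have h2 := mul_nonneg (Fk_nonneg (k - 1)) (Fk_nonneg (k + 1))
            have h3 := sq_nonneg (Fk k)
            have h4 := sq_nonneg (LS n k)
            have : 0 ≤ Fk k ^ 2 + Fk (k - 1) * Fk (k + 1) := by linarith
            positivity
          have u7 : 0 ≤ (4 * (k : ℝ) + 4) * Fk k * (LS n (k - 1) * LS n k) :=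
            mul_nonneg (mul_nonneg (by linarith) (Fk_nonneg _))
              (mul_nonneg (nonneg n (k - 1)) (nonneg n k))
          nlinarith [key, u1, u2, u3, u4, u5, u6, u7]
    exact fun n hn => Int.le_induction base0 step0 n hn
  -- conclude
  intro n k
  rcases lt_or_ge n 0 with h | h
  · rw [hLS0 n (k - 1) (Or.inl h), zero_mul]
    positivity
  · exact (main n h).1 k
end

section
/- Let r ≥ 1 and l ≥ 1 be integers. The (l,r)-Lah numbers, given by the array T(0,0) = 1, T(n,k) = 0 for n < 0, k < 0 or k > n, and T(n,k) = (n + k + 2r − 3)^l·T(n−1,k) + T(n−1,k−1) for n ≥ 1 and 0 ≤ k ≤ n, are log-concave in k for every fixed n: T(n,k)^2 ≥ T(n,k−1)·T(n,k+1) for all k. (This confirms the conjecture of Tankosič on the log-concavity of the generalised Lah numbers.) -/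
private lemma lah_step (l : ℕ) (c1 c2 d1 d2 B B' : ℝ) (hB' : 0 ≤ B')
    (hd1 : 0 < d1) (hc1 : 0 ≤ c1) (hcd : 0 ≤ c1 * d2)
    (h : d1 ^ l * B ≤ d2 ^ l * B') (hs : c1 * d2 ≤ c2 * d1) :
    c1 ^ l * B ≤ c2 ^ l * B' := by
  have h1 : c1 ^ l * B * d1 ^ l ≤ c2 ^ l * B' * d1 ^ l := by
    calc c1 ^ l * B * d1 ^ l = c1 ^ l * (d1 ^ l * B) := by ring
      _ ≤ c1 ^ l * (d2 ^ l * B') := by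
          exact mul_le_mul_of_nonneg_left h (pow_nonneg hc1 l)
      _ = (c1 * d2) ^ l * B' := by rw [mul_pow]; ring
      _ ≤ (c2 * d1) ^ l * B' := by
          exact mul_le_mul_of_nonneg_right (pow_le_pow_left₀ hcd hs l) hB'
      _ = c2 ^ l * B' * d1 ^ l := by rw [mul_pow]; ring
  exact le_of_mul_le_mul_right h1 (pow_pos hd1 l)

private lemma lah_key (l : ℕ) (X Y : ℝ) (hXY : X ≤ Y)
    (bim2 bim1 bi bjm1 bj bjp1 : ℝ)
    (nn2 : 0 ≤ bim2) (nn1 : 0 ≤ bim1) (nn0 : 0 ≤ bi)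
    (nn3 : 0 ≤ bjm1) (nn4 : 0 ≤ bj) (nn5 : 0 ≤ bjp1)
    (R1 : bim1 * bjp1 ≠ 0 → 6 ≤ X)
    (R2 : bim1 * bj ≠ 0 → 5 ≤ X ∧ 3 ≤ Y)
    (R3 : bim2 * bjp1 ≠ 0 → 8 ≤ X)
    (R4 : bim2 * bj ≠ 0 → 7 ≤ X)
    (R5 : bi * bj ≠ 0 → 3 ≤ X ∧ 3 ≤ Y)
    (R6 : bi * bjm1 ≠ 0 → 3 ≤ X)
    (R7 : bim1 * bjm1 ≠ 0 → 4 ≤ X)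
    (I1 : (Y - 1) ^ l * (bim1 * bjp1) ≤ (X - 2) ^ l * (bi * bj))
    (I2 : (Y - 2) ^ l * (bim2 * bj) ≤ (X - 3) ^ l * (bim1 * bjm1))
    (I3 : (Y - 1) ^ l * (bim2 * bjp1) ≤ (X - 3) ^ l * (bim1 * bj))
    (I4 : (Y - 2) ^ l * (bim1 * bj) ≤ (X - 2) ^ l * (bi * bjm1)) :
    Y ^ l * (((X - 4) ^ l * bim1 + bim2) * ((Y - 2) ^ l * bjp1 + bj)) ≤
    (X - 1) ^ l * (((X - 3) ^ l * bi + bim1) * ((Y - 3) ^ l * bj + bjm1)) := by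
  have t1 : (Y * ((X - 4) * (Y - 2))) ^ l * (bim1 * bjp1) ≤
      ((X - 1) * ((X - 3) * (Y - 3))) ^ l * (bi * bj) := by
    rcases eq_or_ne (bim1 * bjp1) 0 with h | h
    · rw [h, mul_zero]
      rcases eq_or_ne (bi * bj) 0 with h' | h'
      · rw [h', mul_zero]
      · obtain ⟨hx, hy⟩ := R5 h'
        exact mul_nonneg (pow_nonneg (mul_nonneg (by linarith)
          (mul_nonneg (by linarith) (by linarith))) l) (mul_nonneg nn0 nn4)
    · have hx := R1 h
      have hy : (6:ℝ) ≤ Y := le_trans hx hXY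
      refine lah_step l _ _ (Y - 1) (X - 2) _ _ (mul_nonneg nn0 nn4)
        (by linarith)
        (mul_nonneg (by linarith) (mul_nonneg (by linarith) (by linarith)))
        (mul_nonneg (mul_nonneg (by linarith)
          (mul_nonneg (by linarith) (by linarith))) (by linarith)) I1 ?_
      have h1 : (0:ℝ) ≤ (Y - X) * (2 * (X - 2) * (Y - 2) - (Y - X)) := by
        have ha : (0:ℝ) ≤ Y - X := by linarith
        have hb : (0:ℝ) ≤ 2 * (X - 2) * (Y - 2) - (Y - X) := by nlinarith
        exact mul_nonneg ha hb
      have h2 : (0:ℝ) ≤ (X - 2) * (Y - 2) := mul_nonneg (by linarith) (by linarith)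
      nlinarith [h1, h2]
  have t2 : (Y * (X - 4)) ^ l * (bim1 * bj) ≤
      ((X - 1) * (Y - 3)) ^ l * (bim1 * bj) := by
    rcases eq_or_ne (bim1 * bj) 0 with h | h
    · rw [h, mul_zero, mul_zero]
    · obtain ⟨hx, hy3⟩ := R2 h
      have hy : X ≤ Y := hXY
      refine mul_le_mul_of_nonneg_right
        (pow_le_pow_left₀ (mul_nonneg (by linarith) (by linarith)) (by nlinarith) l)
        (mul_nonneg nn1 nn4)
  have t3 : (Y * (Y - 2)) ^ l * (bim2 * bjp1) ≤
      ((X - 1) * (X - 3)) ^ l * (bi * bjm1) := by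
    rcases eq_or_ne (bim2 * bjp1) 0 with h | h
    · rw [h, mul_zero]
      rcases eq_or_ne (bi * bjm1) 0 with h' | h'
      · rw [h', mul_zero]
      · have hx := R6 h'
        exact mul_nonneg (pow_nonneg (mul_nonneg (by linarith) (by linarith)) l)
          (mul_nonneg nn0 nn3)
    · have hx := R3 h
      have hy : (8:ℝ) ≤ Y := le_trans hx hXY
      have comb : ((Y - 1) * (Y - 2)) ^ l * (bim2 * bjp1) ≤
          ((X - 3) * (X - 2)) ^ l * (bi * bjm1) := by
        calc ((Y - 1) * (Y - 2)) ^ l * (bim2 * bjp1)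
            = (Y - 2) ^ l * ((Y - 1) ^ l * (bim2 * bjp1)) := by rw [mul_pow]; ring
          _ ≤ (Y - 2) ^ l * ((X - 3) ^ l * (bim1 * bj)) := by
              exact mul_le_mul_of_nonneg_left I3 (pow_nonneg (by linarith) l)
          _ = (X - 3) ^ l * ((Y - 2) ^ l * (bim1 * bj)) := by ring
          _ ≤ (X - 3) ^ l * ((X - 2) ^ l * (bi * bjm1)) := by
              exact mul_le_mul_of_nonneg_left I4 (pow_nonneg (by linarith) l)
          _ = ((X - 3) * (X - 2)) ^ l * (bi * bjm1) := by rw [mul_pow]; ring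
      refine lah_step l _ _ ((Y - 1) * (Y - 2)) ((X - 3) * (X - 2)) _ _
        (mul_nonneg nn0 nn3)
        (mul_pos (by linarith) (by linarith))
        (mul_nonneg (by linarith) (by linarith))
        (mul_nonneg (mul_nonneg (by linarith) (by linarith))
          (mul_nonneg (by linarith) (by linarith))) comb ?_
      nlinarith [mul_nonneg (mul_nonneg (show (0:ℝ) ≤ X - 3 by linarith)
        (show (0:ℝ) ≤ Y - 2 by linarith)) (show (0:ℝ) ≤ Y - X + 1 by linarith)]
  have t4 : Y ^ l * (bim2 * bj) ≤ (X - 1) ^ l * (bim1 * bjm1) := by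
    rcases eq_or_ne (bim2 * bj) 0 with h | h
    · rw [h, mul_zero]
      rcases eq_or_ne (bim1 * bjm1) 0 with h' | h'
      · rw [h', mul_zero]
      · have hx := R7 h'
        exact mul_nonneg (pow_nonneg (by linarith) l) (mul_nonneg nn1 nn3)
    · have hx := R4 h
      have hy : (7:ℝ) ≤ Y := le_trans hx hXY
      refine lah_step l _ _ (Y - 2) (X - 3) _ _ (mul_nonneg nn1 nn3)
        (by linarith) (by linarith)
        (mul_nonneg (by linarith) (by linarith)) I2 ?_
      nlinarith
  simp only [mul_pow] at t1 t2 t3 t4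
  have eL : Y ^ l * (((X - 4) ^ l * bim1 + bim2) * ((Y - 2) ^ l * bjp1 + bj))
      = Y ^ l * ((X - 4) ^ l * (Y - 2) ^ l) * (bim1 * bjp1)
        + Y ^ l * (X - 4) ^ l * (bim1 * bj)
        + Y ^ l * (Y - 2) ^ l * (bim2 * bjp1)
        + Y ^ l * (bim2 * bj) := by ring
  have eR : (X - 1) ^ l * (((X - 3) ^ l * bi + bim1) * ((Y - 3) ^ l * bj + bjm1))
      = (X - 1) ^ l * ((X - 3) ^ l * (Y - 3) ^ l) * (bi * bj)
        + (X - 1) ^ l * (Y - 3) ^ l * (bim1 * bj)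
        + (X - 1) ^ l * (X - 3) ^ l * (bi * bjm1)
        + (X - 1) ^ l * (bim1 * bjm1) := by ring
  rw [eL, eR]
  linarith [t1, t2, t3, t4]

/-- **Log-concavity of the (l,r)-Lah numbers** (conjecture of Tankosič). For integers
`r ≥ 1` and `l ≥ 1`, the array defined by `T(0,0) = 1`, `T(n,k) = 0` for `n < 0`, `k < 0` or
`k > n`, and `T(n,k) = (n + k + 2r − 3)^l·T(n−1,k) + T(n−1,k−1)` for `n ≥ 1`, `0 ≤ k ≤ n`,
is log-concave in `k` for every fixed `n`. -/
theorem lr_lah_log_concave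
    (r : ℤ) (hr : 1 ≤ r) (l : ℕ) (hl : 1 ≤ l)
    (T : ℤ → ℤ → ℝ)
    (hT1 : T 0 0 = 1)
    (hT0 : ∀ n k : ℤ, (n < 0 ∨ k < 0 ∨ n < k) → T n k = 0)
    (hrec : ∀ n k : ℤ, 1 ≤ n → 0 ≤ k → k ≤ n →
      T n k = ((n + k + 2 * r - 3 : ℤ) : ℝ) ^ l * T (n - 1) k + T (n - 1) (k - 1)) :
    ∀ n k : ℤ, T n (k - 1) * T n (k + 1) ≤ (T n k) ^ 2 := by
  -- nonzero values lie in the triangle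
  have hnz : ∀ n k : ℤ, T n k ≠ 0 → 0 ≤ n ∧ 0 ≤ k ∧ k ≤ n := by
    intro n k h
    refine ⟨?_, ?_, ?_⟩
    · by_contra hc; exact h (hT0 n k (Or.inl (by omega)))
    · by_contra hc; exact h (hT0 n k (Or.inr (Or.inl (by omega))))
    · by_contra hc; exact h (hT0 n k (Or.inr (Or.inr (by omega))))
  -- recurrence valid for all k when n ≥ 1
  have hrec' : ∀ n k : ℤ, 1 ≤ n →
      T n k = ((n + k + 2 * r - 3 : ℤ) : ℝ) ^ l * T (n - 1) k + T (n - 1) (k - 1) := by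
    intro n k hn
    by_cases hk0 : 0 ≤ k
    · by_cases hkn : k ≤ n
      · exact hrec n k hn hk0 hkn
      · rw [hT0 n k (Or.inr (Or.inr (by omega))),
          hT0 (n - 1) k (Or.inr (Or.inr (by omega))),
          hT0 (n - 1) (k - 1) (Or.inr (Or.inr (by omega)))]
        ring
    · rw [hT0 n k (Or.inr (Or.inl (by omega))),
        hT0 (n - 1) k (Or.inr (Or.inl (by omega))),
        hT0 (n - 1) (k - 1) (Or.inr (Or.inl (by omega)))]
      ring
  -- nonnegativity
  have hN : ∀ m : ℕ, ∀ k : ℤ, 0 ≤ T (m : ℤ) k := by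
    intro m
    induction m with
    | zero =>
      intro k
      simp only [Nat.cast_zero]
      rcases lt_trichotomy k 0 with h | h | h
      · rw [hT0 0 k (Or.inr (Or.inl h))]
      · rw [h, hT1]; norm_num
      · rw [hT0 0 k (Or.inr (Or.inr h))]
    | succ m ih =>
      intro k
      have h1 : (1 : ℤ) ≤ ((m + 1 : ℕ) : ℤ) := by push_cast; omega
      rw [hrec' _ k h1]
      have hm : ((m + 1 : ℕ) : ℤ) - 1 = (m : ℤ) := by push_cast; ring
      rw [hm]
      rcases eq_or_ne (T (m : ℤ) k) 0 with h0 | h0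
      · rw [h0, mul_zero, zero_add]; exact ih (k - 1)
      · obtain ⟨-, hk0, hkm⟩ := hnz _ _ h0
        have hbase : (0 : ℝ) ≤ ((((m + 1 : ℕ) : ℤ) + k + 2 * r - 3 : ℤ) : ℝ) := by
          have : (0 : ℤ) ≤ ((m + 1 : ℕ) : ℤ) + k + 2 * r - 3 := by push_cast; omega
          exact_mod_cast this
        exact add_nonneg (mul_nonneg (pow_nonneg hbase l) (ih k)) (ih (k - 1))
  -- main strengthened statement: weighted strong log-concavity of each row
  have hH : ∀ m : ℕ, ∀ i j : ℤ, i ≤ j →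
      (((m : ℤ) + j + 2 * r : ℤ) : ℝ) ^ l * (T (m : ℤ) (i - 1) * T (m : ℤ) (j + 1)) ≤
      (((m : ℤ) + i + 2 * r - 1 : ℤ) : ℝ) ^ l * (T (m : ℤ) i * T (m : ℤ) j) := by
    intro m
    induction m with
    | zero =>
      intro i j hij
      simp only [Nat.cast_zero]
      have hL : T 0 (i - 1) * T 0 (j + 1) = 0 := by
        rcases eq_or_ne (T 0 (i - 1)) 0 with h | h
        · rw [h, zero_mul]
        · obtain ⟨-, h1, h2⟩ := hnz _ _ h
          rw [hT0 0 (j + 1) (Or.inr (Or.inr (by omega))), mul_zero]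
      rw [hL, mul_zero]
      rcases eq_or_ne (T 0 i * T 0 j) 0 with h | h
      · rw [h, mul_zero]
      · have h' := mul_ne_zero_iff.mp h
        obtain ⟨-, hi0, hi1⟩ := hnz _ _ h'.1
        obtain ⟨-, hj0, hj1⟩ := hnz _ _ h'.2
        have hb : (0 : ℝ) ≤ ((0 + i + 2 * r - 1 : ℤ) : ℝ) := by
          have : (0 : ℤ) ≤ 0 + i + 2 * r - 1 := by omega
          exact_mod_cast this
        have hTi : 0 ≤ T 0 i := by have := hN 0 i; simpa using this
        have hTj : 0 ≤ T 0 j := by have := hN 0 j; simpa using this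
        exact mul_nonneg (pow_nonneg hb l) (mul_nonneg hTi hTj)
    | succ m ih =>
      intro i j hij
      have hcast : ((m + 1 : ℕ) : ℤ) = (m : ℤ) + 1 := by push_cast; ring
      rw [hcast]
      have hone : (1 : ℤ) ≤ (m : ℤ) + 1 := by omega
      rw [hrec' _ (i - 1) hone, hrec' _ (j + 1) hone, hrec' _ i hone, hrec' _ j hone]
      have hm1 : (m : ℤ) + 1 - 1 = (m : ℤ) := by ring
      rw [hm1]
      have e2 : i - 1 - 1 = i - 2 := by ring
      have e4 : j + 1 - 1 = j := by ring
      rw [e2, e4]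
      -- set up applications of lah_key
      have hXY : ((m : ℝ) + (i : ℝ) + 2 * (r : ℝ) + 1) ≤ ((m : ℝ) + (j : ℝ) + 2 * (r : ℝ) + 1) := by
        have : (i : ℝ) ≤ (j : ℝ) := by exact_mod_cast hij
        linarith
      have I1 : ((m : ℝ) + (j : ℝ) + 2 * (r : ℝ) + 1 - 1) ^ l * (T (m : ℤ) (i - 1) * T (m : ℤ) (j + 1)) ≤
          ((m : ℝ) + (i : ℝ) + 2 * (r : ℝ) + 1 - 2) ^ l * (T (m : ℤ) i * T (m : ℤ) j) := by
        refine le_trans (le_of_eq ?_) (le_trans (ih i j hij) (le_of_eq ?_)) <;>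
          (push_cast; ring)
      have I2 : ((m : ℝ) + (j : ℝ) + 2 * (r : ℝ) + 1 - 2) ^ l * (T (m : ℤ) (i - 2) * T (m : ℤ) j) ≤
          ((m : ℝ) + (i : ℝ) + 2 * (r : ℝ) + 1 - 3) ^ l * (T (m : ℤ) (i - 1) * T (m : ℤ) (j - 1)) := by
        have h' := ih (i - 1) (j - 1) (by omega)
        rw [e2, show j - 1 + 1 = j from by ring] at h'
        refine le_trans (le_of_eq ?_) (le_trans h' (le_of_eq ?_)) <;>
          (push_cast; ring)
      have I3 : ((m : ℝ) + (j : ℝ) + 2 * (r : ℝ) + 1 - 1) ^ l * (T (m : ℤ) (i - 2) * T (m : ℤ) (j + 1)) ≤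
          ((m : ℝ) + (i : ℝ) + 2 * (r : ℝ) + 1 - 3) ^ l * (T (m : ℤ) (i - 1) * T (m : ℤ) j) := by
        have h' := ih (i - 1) j (by omega)
        rw [e2] at h'
        refine le_trans (le_of_eq ?_) (le_trans h' (le_of_eq ?_)) <;>
          (push_cast; ring)
      have I4 : ((m : ℝ) + (j : ℝ) + 2 * (r : ℝ) + 1 - 2) ^ l * (T (m : ℤ) (i - 1) * T (m : ℤ) j) ≤
          ((m : ℝ) + (i : ℝ) + 2 * (r : ℝ) + 1 - 2) ^ l * (T (m : ℤ) i * T (m : ℤ) (j - 1)) := by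
        rcases eq_or_lt_of_le hij with heq | hlt
        · subst heq
          exact le_of_eq (by ring)
        · have h' := ih i (j - 1) (by omega)
          rw [show j - 1 + 1 = j from by ring] at h'
          refine le_trans (le_of_eq ?_) (le_trans h' (le_of_eq ?_)) <;>
            (push_cast; ring)
      have R1 : T (m : ℤ) (i - 1) * T (m : ℤ) (j + 1) ≠ 0 →
          (6 : ℝ) ≤ (m : ℝ) + (i : ℝ) + 2 * (r : ℝ) + 1 := by
        intro h
        have h' := mul_ne_zero_iff.mp h
        obtain ⟨-, ha, hb⟩ := hnz _ _ h'.1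
        obtain ⟨-, hc, hd⟩ := hnz _ _ h'.2
        have : (6 : ℤ) ≤ (m : ℤ) + i + 2 * r + 1 := by omega
        exact_mod_cast this
      have R2 : T (m : ℤ) (i - 1) * T (m : ℤ) j ≠ 0 →
          (5 : ℝ) ≤ (m : ℝ) + (i : ℝ) + 2 * (r : ℝ) + 1 ∧
          (3 : ℝ) ≤ (m : ℝ) + (j : ℝ) + 2 * (r : ℝ) + 1 := by
        intro h
        have h' := mul_ne_zero_iff.mp h
        obtain ⟨-, ha, hb⟩ := hnz _ _ h'.1
        obtain ⟨-, hc, hd⟩ := hnz _ _ h'.2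
        constructor
        · have : (5 : ℤ) ≤ (m : ℤ) + i + 2 * r + 1 := by omega
          exact_mod_cast this
        · have : (3 : ℤ) ≤ (m : ℤ) + j + 2 * r + 1 := by omega
          exact_mod_cast this
      have R3 : T (m : ℤ) (i - 2) * T (m : ℤ) (j + 1) ≠ 0 →
          (8 : ℝ) ≤ (m : ℝ) + (i : ℝ) + 2 * (r : ℝ) + 1 := by
        intro h
        have h' := mul_ne_zero_iff.mp h
        obtain ⟨-, ha, hb⟩ := hnz _ _ h'.1
        obtain ⟨-, hc, hd⟩ := hnz _ _ h'.2
        have : (8 : ℤ) ≤ (m : ℤ) + i + 2 * r + 1 := by omega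
        exact_mod_cast this
      have R4 : T (m : ℤ) (i - 2) * T (m : ℤ) j ≠ 0 →
          (7 : ℝ) ≤ (m : ℝ) + (i : ℝ) + 2 * (r : ℝ) + 1 := by
        intro h
        have h' := mul_ne_zero_iff.mp h
        obtain ⟨-, ha, hb⟩ := hnz _ _ h'.1
        obtain ⟨-, hc, hd⟩ := hnz _ _ h'.2
        have : (7 : ℤ) ≤ (m : ℤ) + i + 2 * r + 1 := by omega
        exact_mod_cast this
      have R5 : T (m : ℤ) i * T (m : ℤ) j ≠ 0 →
          (3 : ℝ) ≤ (m : ℝ) + (i : ℝ) + 2 * (r : ℝ) + 1 ∧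
          (3 : ℝ) ≤ (m : ℝ) + (j : ℝ) + 2 * (r : ℝ) + 1 := by
        intro h
        have h' := mul_ne_zero_iff.mp h
        obtain ⟨-, ha, hb⟩ := hnz _ _ h'.1
        obtain ⟨-, hc, hd⟩ := hnz _ _ h'.2
        constructor
        · have : (3 : ℤ) ≤ (m : ℤ) + i + 2 * r + 1 := by omega
          exact_mod_cast this
        · have : (3 : ℤ) ≤ (m : ℤ) + j + 2 * r + 1 := by omega
          exact_mod_cast this
      have R6 : T (m : ℤ) i * T (m : ℤ) (j - 1) ≠ 0 →
          (3 : ℝ) ≤ (m : ℝ) + (i : ℝ) + 2 * (r : ℝ) + 1 := by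
        intro h
        have h' := mul_ne_zero_iff.mp h
        obtain ⟨-, ha, hb⟩ := hnz _ _ h'.1
        have : (3 : ℤ) ≤ (m : ℤ) + i + 2 * r + 1 := by omega
        exact_mod_cast this
      have R7 : T (m : ℤ) (i - 1) * T (m : ℤ) (j - 1) ≠ 0 →
          (4 : ℝ) ≤ (m : ℝ) + (i : ℝ) + 2 * (r : ℝ) + 1 := by
        intro h
        have h' := mul_ne_zero_iff.mp h
        obtain ⟨-, ha, hb⟩ := hnz _ _ h'.1
        have : (4 : ℤ) ≤ (m : ℤ) + i + 2 * r + 1 := by omega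
        exact_mod_cast this
      have key := lah_key l ((m : ℝ) + (i : ℝ) + 2 * (r : ℝ) + 1)
        ((m : ℝ) + (j : ℝ) + 2 * (r : ℝ) + 1) hXY
        (T (m : ℤ) (i - 2)) (T (m : ℤ) (i - 1)) (T (m : ℤ) i)
        (T (m : ℤ) (j - 1)) (T (m : ℤ) j) (T (m : ℤ) (j + 1))
        (hN m _) (hN m _) (hN m _) (hN m _) (hN m _) (hN m _)
        R1 R2 R3 R4 R5 R6 R7 I1 I2 I3 I4
      refine le_trans (le_of_eq ?_) (le_trans key (le_of_eq ?_)) <;>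
        (push_cast; ring)
  -- conclusion
  intro n k
  rcases lt_or_ge n 0 with hn | hn
  · rw [hT0 n (k - 1) (Or.inl hn), zero_mul]
    exact sq_nonneg _
  · lift n to ℕ using hn with m
    have H := hH m k k le_rfl
    have hP : 0 ≤ T (m : ℤ) (k - 1) * T (m : ℤ) (k + 1) :=
      mul_nonneg (hN m _) (hN m _)
    rcases hP.eq_or_lt with h | h
    · rw [← h]
      exact sq_nonneg _
    · have h1 : T (m : ℤ) (k - 1) ≠ 0 := by
        intro h0; rw [h0, zero_mul] at h; exact lt_irrefl _ h
      have h2 : T (m : ℤ) (k + 1) ≠ 0 := by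
        intro h0; rw [h0, mul_zero] at h; exact lt_irrefl _ h
      obtain ⟨-, ha, hb⟩ := hnz _ _ h1
      obtain ⟨-, hc, hd⟩ := hnz _ _ h2
      have hS : 0 ≤ T (m : ℤ) k * T (m : ℤ) k := mul_nonneg (hN m _) (hN m _)
      have hc2 : (0 : ℝ) ≤ (((m : ℤ) + k + 2 * r - 1 : ℤ) : ℝ) := by
        have : (0 : ℤ) ≤ (m : ℤ) + k + 2 * r - 1 := by omega
        exact_mod_cast this
      have hc1pos : (0 : ℝ) < (((m : ℤ) + k + 2 * r : ℤ) : ℝ) := by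
        have : (0 : ℤ) < (m : ℤ) + k + 2 * r := by omega
        exact_mod_cast this
      have hcc : (((m : ℤ) + k + 2 * r - 1 : ℤ) : ℝ) ≤ (((m : ℤ) + k + 2 * r : ℤ) : ℝ) := by
        have : ((m : ℤ) + k + 2 * r - 1 : ℤ) ≤ ((m : ℤ) + k + 2 * r : ℤ) := by omega
        exact_mod_cast this
      have step : (((m : ℤ) + k + 2 * r : ℤ) : ℝ) ^ l * (T (m : ℤ) (k - 1) * T (m : ℤ) (k + 1)) ≤
          (((m : ℤ) + k + 2 * r : ℤ) : ℝ) ^ l * (T (m : ℤ) k * T (m : ℤ) k) :=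
        H.trans (mul_le_mul_of_nonneg_right (pow_le_pow_left₀ hc2 hcc l) hS)
      have := le_of_mul_le_mul_left step (pow_pos hc1pos l)
      rw [pow_two]
      exact this
end

section
/- Let r ≥ 1 and l ≥ 1 be integers. The (l,r)-Stirling numbers of the second kind, given by the array S(r,r) = 1, S(n,k) = 0 for k < r or k > n, and S(n,k) = k^l·S(n−1,k) + S(n−1,k−1) for n > r and r ≤ k ≤ n, are log-concave in k for every fixed n ≥ r: S(n,k)^2 ≥ S(n,k−1)·S(n,k+1) for all k. -/
/-- Pure-real algebraic step for the weighted log-concavity induction. -/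
theorem lr_stirling_key_step (l : ℕ) (x A B C D : ℝ) (hx : 2 ≤ x)
    (hA : 0 ≤ A) (hB : 0 < B) (hC : 0 < C) (hD : 0 ≤ D)
    (h1 : x ^ l * (A * C) ≤ (x - 1) ^ l * B ^ 2)
    (h2 : (x + 1) ^ l * (B * D) ≤ x ^ l * C ^ 2) :
    (x + 1) ^ l * (((x - 1) ^ l * B + A) * ((x + 1) ^ l * D + C)) ≤
      x ^ l * (x ^ l * C + B) ^ 2 := by
  have hx0 : (0:ℝ) < x := by linarith
  have hx1 : (0:ℝ) < x - 1 := by linarith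
  have hx2 : (0:ℝ) < x + 1 := by linarith
  have hp0 : (0:ℝ) < x ^ l := pow_pos hx0 l
  have hq0 : (0:ℝ) < (x - 1) ^ l := pow_pos hx1 l
  have hs0 : (0:ℝ) < (x + 1) ^ l := pow_pos hx2 l
  have hqs : (x - 1) ^ l * (x + 1) ^ l ≤ (x ^ l) ^ 2 := by
    calc (x - 1) ^ l * (x + 1) ^ l = ((x - 1) * (x + 1)) ^ l := (mul_pow _ _ _).symm
      _ ≤ (x * x) ^ l := pow_le_pow_left₀ (by nlinarith) (by nlinarith) l
      _ = (x ^ l) ^ 2 := by rw [mul_pow]; ring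
  have hcross : (x + 1) ^ l * (A * D) ≤ (x - 1) ^ l * (B * C) := by
    have hm : (x ^ l * (A * C)) * ((x + 1) ^ l * (B * D)) ≤
        ((x - 1) ^ l * B ^ 2) * (x ^ l * C ^ 2) := by
      apply mul_le_mul h1 h2
      · exact mul_nonneg hs0.le (mul_nonneg hB.le hD)
      · exact mul_nonneg hq0.le (sq_nonneg B)
    have hpBC : (0:ℝ) < x ^ l * (B * C) := by positivity
    refine le_of_mul_le_mul_right ?_ hpBC
    calc (x + 1) ^ l * (A * D) * (x ^ l * (B * C))
        = (x ^ l * (A * C)) * ((x + 1) ^ l * (B * D)) := by ring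
      _ ≤ ((x - 1) ^ l * B ^ 2) * (x ^ l * C ^ 2) := hm
      _ = (x - 1) ^ l * (B * C) * (x ^ l * (B * C)) := by ring
  have e1 : (x + 1) ^ l * ((x - 1) ^ l * ((x + 1) ^ l * (B * D))) ≤
      x ^ l * (x ^ l * (x ^ l * C ^ 2)) := by
    calc (x + 1) ^ l * ((x - 1) ^ l * ((x + 1) ^ l * (B * D)))
        ≤ (x + 1) ^ l * ((x - 1) ^ l * (x ^ l * C ^ 2)) := by
          apply mul_le_mul_of_nonneg_left (mul_le_mul_of_nonneg_left h2 hq0.le) hs0.le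
      _ = ((x - 1) ^ l * (x + 1) ^ l) * (x ^ l * C ^ 2) := by ring
      _ ≤ (x ^ l) ^ 2 * (x ^ l * C ^ 2) := by
          apply mul_le_mul_of_nonneg_right hqs (by positivity)
      _ = x ^ l * (x ^ l * (x ^ l * C ^ 2)) := by ring
  have e2 : (x + 1) ^ l * ((x - 1) ^ l * (B * C)) ≤ (x ^ l) ^ 2 * (B * C) := by
    calc (x + 1) ^ l * ((x - 1) ^ l * (B * C))
        = ((x - 1) ^ l * (x + 1) ^ l) * (B * C) := by ring
      _ ≤ (x ^ l) ^ 2 * (B * C) := mul_le_mul_of_nonneg_right hqs (by positivity)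
  have e3 : (x + 1) ^ l * ((x + 1) ^ l * (A * D)) ≤ (x ^ l) ^ 2 * (B * C) := by
    calc (x + 1) ^ l * ((x + 1) ^ l * (A * D))
        ≤ (x + 1) ^ l * ((x - 1) ^ l * (B * C)) := mul_le_mul_of_nonneg_left hcross hs0.le
      _ ≤ (x ^ l) ^ 2 * (B * C) := e2
  have e4 : (x + 1) ^ l * (A * C) ≤ x ^ l * B ^ 2 := by
    refine le_of_mul_le_mul_left ?_ hp0
    calc x ^ l * ((x + 1) ^ l * (A * C)) = (x + 1) ^ l * (x ^ l * (A * C)) := by ring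
      _ ≤ (x + 1) ^ l * ((x - 1) ^ l * B ^ 2) := mul_le_mul_of_nonneg_left h1 hs0.le
      _ = ((x - 1) ^ l * (x + 1) ^ l) * B ^ 2 := by ring
      _ ≤ (x ^ l) ^ 2 * B ^ 2 := mul_le_mul_of_nonneg_right hqs (sq_nonneg B)
      _ = x ^ l * (x ^ l * B ^ 2) := by ring
  nlinarith [e1, e2, e3, e4]

/-- **Log-concavity of the (l,r)-Stirling numbers of the second kind.** For integers `r ≥ 1`
and `l ≥ 1`, the array defined by `S(r,r) = 1`, `S(n,k) = 0` for `k < r` or `k > n`, and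
`S(n,k) = k^l·S(n−1,k) + S(n−1,k−1)` for `n > r`, `r ≤ k ≤ n`, is log-concave in `k` for every
fixed `n ≥ r`. -/
theorem lr_stirling_second_log_concave
    (r : ℤ) (hr : 1 ≤ r) (l : ℕ) (hl : 1 ≤ l)
    (S : ℤ → ℤ → ℝ)
    (hS1 : S r r = 1)
    (hS0 : ∀ n k : ℤ, (k < r ∨ n < k) → S n k = 0)
    (hrec : ∀ n k : ℤ, r < n → r ≤ k → k ≤ n →
      S n k = (k : ℝ) ^ l * S (n - 1) k + S (n - 1) (k - 1)) :
    ∀ n k : ℤ, r ≤ n → S n (k - 1) * S n (k + 1) ≤ (S n k) ^ 2 := by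
  -- the recurrence in fact holds for all k when n > r
  have hrec' : ∀ n k : ℤ, r < n → S n k = (k : ℝ) ^ l * S (n - 1) k + S (n - 1) (k - 1) := by
    intro n k hn
    rcases lt_or_ge k r with h | h
    · rw [hS0 n k (Or.inl h), hS0 (n-1) k (Or.inl h), hS0 (n-1) (k-1) (Or.inl (by omega)),
        mul_zero, add_zero]
    rcases le_or_gt k n with h2 | h2
    · exact hrec n k hn h h2
    · rw [hS0 n k (Or.inr h2), hS0 (n-1) k (Or.inr (by omega)),
        hS0 (n-1) (k-1) (Or.inr (by omega)), mul_zero, add_zero]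
  -- positivity on the support
  have hpos : ∀ n : ℤ, r ≤ n → ∀ k : ℤ, r ≤ k → k ≤ n → 0 < S n k := by
    refine Int.le_induction ?_ ?_
    · intro k hk1 hk2
      have hkr : k = r := le_antisymm hk2 hk1
      rw [hkr, hS1]; norm_num
    · intro n hn ih k hk1 hk2
      have hb := hrec' (n+1) k (by omega)
      have hn1 : n + 1 - 1 = n := by ring
      rw [hn1] at hb
      rw [hb]
      have hk0 : (0:ℝ) < (k:ℝ) := by exact_mod_cast (by omega : (0:ℤ) < k)
      have hkl : (0:ℝ) < (k:ℝ) ^ l := pow_pos hk0 l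
      rcases le_or_gt k n with h | h
      · have h1 : 0 < S n k := ih k hk1 h
        have h2 : 0 ≤ S n (k-1) := by
          rcases lt_or_ge (k-1) r with hh | hh
          · rw [hS0 n (k-1) (Or.inl hh)]
          · exact (ih (k-1) hh (by omega)).le
        nlinarith
      · have h1 : S n k = 0 := hS0 n k (Or.inr h)
        have h2 : 0 < S n (k-1) := ih (k-1) (by omega) (by omega)
        rw [h1, mul_zero, zero_add]; exact h2
  have hnn : ∀ n : ℤ, r ≤ n → ∀ k : ℤ, 0 ≤ S n k := by
    intro n hn k
    rcases lt_or_ge k r with h | h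
    · rw [hS0 n k (Or.inl h)]
    rcases le_or_gt k n with h2 | h2
    · exact (hpos n hn k h h2).le
    · rw [hS0 n k (Or.inr h2)]
  -- strengthened (weighted) log-concavity
  have hLC : ∀ n : ℤ, r ≤ n → ∀ k : ℤ, r ≤ k →
      ((k:ℝ) + 1) ^ l * (S n (k-1) * S n (k+1)) ≤ (k:ℝ) ^ l * (S n k) ^ 2 := by
    refine Int.le_induction ?_ ?_
    · intro k hk
      have h0 : S r (k+1) = 0 := hS0 r (k+1) (Or.inr (by omega))
      rw [h0, mul_zero, mul_zero]
      have hk0 : (0:ℝ) ≤ (k:ℝ) := by exact_mod_cast (by omega : (0:ℤ) ≤ k)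
      exact mul_nonneg (pow_nonneg hk0 l) (sq_nonneg _)
    · intro n hn ih k hk
      have hk0 : (0:ℝ) ≤ (k:ℝ) := by exact_mod_cast (by omega : (0:ℤ) ≤ k)
      have hb : ∀ j : ℤ, S (n+1) j = (j:ℝ) ^ l * S n j + S n (j-1) := by
        intro j
        have hb' := hrec' (n+1) j (by omega)
        have hn1 : n + 1 - 1 = n := by ring
        rwa [hn1] at hb'
      rcases eq_or_lt_of_le hk with hkr | hkr
      · -- k = r : left factor vanishes
        have h0 : S (n+1) (k-1) = 0 := hS0 (n+1) (k-1) (Or.inl (by omega))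
        rw [h0, zero_mul, mul_zero]
        exact mul_nonneg (pow_nonneg hk0 l) (sq_nonneg _)
      rcases lt_or_ge n k with hkn | hkn
      · -- k ≥ n+1 : right factor vanishes
        have h0 : S (n+1) (k+1) = 0 := hS0 (n+1) (k+1) (Or.inr (by omega))
        rw [h0, mul_zero, mul_zero]
        exact mul_nonneg (pow_nonneg hk0 l) (sq_nonneg _)
      -- main case : r < k ≤ n
      have hB : 0 < S n (k-1) := hpos n hn (k-1) (by omega) (by omega)
      have hC : 0 < S n k := hpos n hn k hk (by omega)
      have hA : 0 ≤ S n (k-2) := hnn n hn (k-2)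
      have hD : 0 ≤ S n (k+1) := hnn n hn (k+1)
      have h1 := ih (k-1) (by omega)
      have h2 := ih k hk
      have ea : k - 1 - 1 = k - 2 := by ring
      have eb : k - 1 + 1 = k := by ring
      rw [ea, eb] at h1
      push_cast at h1
      have h1' : (k:ℝ) ^ l * (S n (k-2) * S n k) ≤ ((k:ℝ) - 1) ^ l * (S n (k-1)) ^ 2 := by
        have e : (k:ℝ) - 1 + 1 = (k:ℝ) := by ring
        rwa [e] at h1
      rw [hb (k-1), hb k, hb (k+1)]
      have ec : k + 1 - 1 = k := by ring
      rw [ea, ec]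
      push_cast
      have hx2 : (2:ℝ) ≤ (k:ℝ) := by exact_mod_cast (by omega : (2:ℤ) ≤ k)
      have := lr_stirling_key_step l (k:ℝ) (S n (k-2)) (S n (k-1)) (S n k) (S n (k+1))
        hx2 hA hB hC hD h1' h2
      convert this using 2 <;> ring
  -- conclude
  intro n k hn
  rcases lt_or_ge (k-1) r with h | h
  · rw [hS0 n (k-1) (Or.inl h), zero_mul]; exact sq_nonneg _
  rcases lt_or_ge n (k+1) with h2 | h2
  · rw [hS0 n (k+1) (Or.inr h2), mul_zero]; exact sq_nonneg _
  have hk : r ≤ k := by omega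
  have hlc := hLC n hn k hk
  have hx1 : (1:ℝ) ≤ (k:ℝ) := by exact_mod_cast (by omega : (1:ℤ) ≤ k)
  have hple : ((k:ℝ)) ^ l ≤ ((k:ℝ) + 1) ^ l := pow_le_pow_left₀ (by linarith) (by linarith) l
  have hprod : 0 ≤ S n (k-1) * S n (k+1) :=
    mul_nonneg (hnn n hn (k-1)) (hnn n hn (k+1))
  have hp0 : (0:ℝ) < (k:ℝ) ^ l := pow_pos (by linarith) l
  nlinarith [mul_le_mul_of_nonneg_right hple hprod]
end

section
/- Let r ≥ 1 and l ≥ 1 be integers. The (l,r)-Stirling numbers of the first kind, given by the array s(r,r) = 1, s(n,k) = 0 for k < r or k > n, and s(n,k) = (n−1)^l·s(n−1,k) + s(n−1,k−1) for n > r and r ≤ k ≤ n, are log-concave in k for every fixed n ≥ r: s(n,k)^2 ≥ s(n,k−1)·s(n,k+1) for all k. -/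
/-- **Log-concavity of the (l,r)-Stirling numbers of the first kind.** For integers `r ≥ 1`
and `l ≥ 1`, the array defined by `s(r,r) = 1`, `s(n,k) = 0` for `k < r` or `k > n`, and
`s(n,k) = (n−1)^l·s(n−1,k) + s(n−1,k−1)` for `n > r`, `r ≤ k ≤ n`, is log-concave in `k` for
every fixed `n ≥ r`. -/
theorem lr_stirling_first_log_concave
    (r : ℤ) (hr : 1 ≤ r) (l : ℕ) (hl : 1 ≤ l)
    (s : ℤ → ℤ → ℝ)
    (hs1 : s r r = 1)
    (hs0 : ∀ n k : ℤ, (k < r ∨ n < k) → s n k = 0)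
    (hrec : ∀ n k : ℤ, r < n → r ≤ k → k ≤ n →
      s n k = ((n : ℝ) - 1) ^ l * s (n - 1) k + s (n - 1) (k - 1)) :
    ∀ n k : ℤ, r ≤ n → s n (k - 1) * s n (k + 1) ≤ (s n k) ^ 2 := by
  suffices H : ∀ n : ℤ, r ≤ n →
      (∀ k, r ≤ k → k ≤ n → 0 < s n k) ∧
      (∀ k, s n (k-1) * s n (k+1) ≤ (s n k)^2) by
    intro n k hn; exact (H n hn).2 k
  refine Int.le_induction ?_ ?_
  · -- base case n = r
    constructor
    · intro k hk1 hk2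
      have hk : k = r := le_antisymm hk2 hk1
      subst hk; rw [hs1]; norm_num
    · intro k
      by_cases hk : k = r
      · rw [hk, hs0 r (r-1) (Or.inl (by omega)), hs1]
        norm_num
      · rw [hs0 r k (by omega)]
        rcases lt_or_gt_of_ne hk with h | h
        · rw [hs0 r (k-1) (Or.inl (by omega))]; norm_num
        · rw [hs0 r (k+1) (Or.inr (by omega))]; norm_num
  · intro n hn ih
    obtain ⟨ihpos, ihlc⟩ := ih
    have hnn : ∀ k, 0 ≤ s n k := by
      intro k
      rcases le_or_gt r k with h1 | h1
      · rcases le_or_gt k n with h2 | h2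
        · exact (ihpos k h1 h2).le
        · rw [hs0 n k (Or.inr h2)]
      · rw [hs0 n k (Or.inl h1)]
    set c : ℝ := (n : ℝ) ^ l with hc
    have hn0 : (0:ℝ) < (n:ℝ) := by exact_mod_cast lt_of_lt_of_le (by omega) hn
    have hcpos : 0 < c := by positivity
    have hexp : ∀ j : ℤ, s (n+1) j = c * s n j + s n (j-1) := by
      intro j
      rcases le_or_gt r j with h1 | h1
      · rcases le_or_gt j (n+1) with h2 | h2
        · have h := hrec (n+1) j (by omega) h1 h2
          have e : ((n:ℤ)+1 : ℤ) - 1 = n := by ring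
          rw [e] at h
          have e2 : (((n:ℤ)+1 : ℤ) : ℝ) - 1 = (n : ℝ) := by push_cast; ring
          rw [e2] at h
          exact h
        · rw [hs0 (n+1) j (Or.inr h2), hs0 n j (Or.inr (by omega)),
            hs0 n (j-1) (Or.inr (by omega))]; ring
      · rw [hs0 (n+1) j (Or.inl h1), hs0 n j (Or.inl h1),
          hs0 n (j-1) (Or.inl (by omega))]; ring
    have hprod : ∀ k : ℤ, s n (k-2) * s n (k+1) ≤ s n (k-1) * s n k := by
      intro k
      by_cases hz : r ≤ k - 2 ∧ k + 1 ≤ n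
      · have p1 := ihpos (k-1) (by omega) (by omega)
        have p0 := ihpos k (by omega) (by omega)
        have l2 : s n (k-2) * s n k ≤ (s n (k-1))^2 := by
          have h := ihlc (k-1)
          rw [show k-1-1 = k-2 from by ring, show k-1+1 = k from by ring] at h
          exact h
        nlinarith [ihlc k, hnn (k-2), hnn (k+1), mul_pos p1 p0]
      · have h0 : s n (k-2) = 0 ∨ s n (k+1) = 0 := by
          rcases not_and_or.mp hz with h | h
          · exact Or.inl (hs0 n (k-2) (Or.inl (by omega)))
          · exact Or.inr (hs0 n (k+1) (Or.inr (by omega)))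
        rcases h0 with h | h
        · rw [h, zero_mul]; exact mul_nonneg (hnn _) (hnn _)
        · rw [h, mul_zero]; exact mul_nonneg (hnn _) (hnn _)
    constructor
    · intro k hk1 hk2
      rw [hexp k]
      rcases le_or_gt k n with h2 | h2
      · have hp := ihpos k hk1 h2
        nlinarith [hnn (k-1)]
      · have hk : k = n+1 := by omega
        have h0 : s n k = 0 := hs0 n k (Or.inr (by omega))
        have hp := ihpos (k-1) (by omega) (by omega)
        rw [h0]; nlinarith
    · intro k
      rw [hexp (k-1), hexp k, hexp (k+1)]
      rw [show k - 1 - 1 = k - 2 from by ring, show k + 1 - 1 = k from by ring]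
      have l1 := ihlc k
      have l2 : s n (k-2) * s n k ≤ (s n (k-1))^2 := by
        have h := ihlc (k-1)
        rw [show k-1-1 = k-2 from by ring, show k-1+1 = k from by ring] at h
        exact h
      have hp := hprod k
      nlinarith [mul_le_mul_of_nonneg_left l1 (mul_nonneg hcpos.le hcpos.le),
        mul_le_mul_of_nonneg_left hp hcpos.le]
end

section
/- Let r ≥ 1 and l ≥ 1 be integers. The (l,r)-Eulerian numbers, given by the array A(r,r−1) = 1, A(n,k) = 0 for k < r−1 or k ≥ n, and A(n,k) = (n−k)^l·A(n−1,k−1) + (k+1)^l·A(n−1,k) for n > r, are log-concave in k for every fixed n ≥ r: A(n,k)^2 ≥ A(n,k−1)·A(n,k+1) for all k. -/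
set_option maxHeartbeats 1000000

/-- Core algebraic lemma for the inductive step of the log-concavity proof. -/
theorem lr_step_ineq (u p m v q s B2 B1 B0 Bp : ℝ)
    (hu : 0 ≤ u) (hp : 0 ≤ p) (hm : 0 ≤ m) (hv : 0 ≤ v) (hq : 0 ≤ q) (hs : 0 ≤ s)
    (hB2 : 0 ≤ B2) (hB1 : 0 ≤ B1) (hB0 : 0 ≤ B0) (hBp : 0 ≤ Bp)
    (hD : 0 < u * p * v * q)
    (I1 : p * v * (B2 * B0) ≤ u * s * B1 ^ 2)
    (I2 : u * q * (B1 * Bp) ≤ m * v * B0 ^ 2)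
    (I3 : u * p * v * q * (B2 * Bp) ≤ u * v * m * s * (B1 * B0))
    (K : p * m * (q * s) ≤ (u * v) ^ 2) :
    p * q * ((p * B2 + s * B1) * (m * B0 + q * Bp)) ≤ u * v * (u * B1 + v * B0) ^ 2 := by
  apply le_of_mul_le_mul_left _ hD
  have hT1 : u*p^3*v*q^2*m*(B2*B0) ≤ u^4*p*v^2*q*B1^2 := by
    have h1 : (u*p^2*q^2*m) * (p*v*(B2*B0)) ≤ (u*p^2*q^2*m) * (u*s*B1^2) :=
      mul_le_mul_of_nonneg_left I1 (by positivity)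
    have h2 : (u^2*p*q*B1^2) * (p*m*(q*s)) ≤ (u^2*p*q*B1^2) * ((u*v)^2) :=
      mul_le_mul_of_nonneg_left K (by positivity)
    nlinarith [h1, h2]
  have hT2 : u*p^3*v*q^3*(B2*Bp) ≤ u^3*p*v^3*q*(B1*B0) := by
    have h1 : (p^2*q^2) * (u*p*v*q*(B2*Bp)) ≤ (p^2*q^2) * (u*v*m*s*(B1*B0)) :=
      mul_le_mul_of_nonneg_left I3 (by positivity)
    have h2 : (u*v*p*q*(B1*B0)) * (p*m*(q*s)) ≤ (u*v*p*q*(B1*B0)) * ((u*v)^2) :=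
      mul_le_mul_of_nonneg_left K (by positivity)
    nlinarith [h1, h2]
  have hT3 : u*p^2*v*q^2*(m*s)*(B1*B0) ≤ u^3*p*v^3*q*(B1*B0) := by
    have h2 : (u*v*p*q*(B1*B0)) * (p*m*(q*s)) ≤ (u*v*p*q*(B1*B0)) * ((u*v)^2) :=
      mul_le_mul_of_nonneg_left K (by positivity)
    nlinarith [h2]
  have hT4 : u*p^2*v*q^3*s*(B1*Bp) ≤ u^2*p*v^4*q*B0^2 := by
    have h1 : (p^2*v*q^2*s) * (u*q*(B1*Bp)) ≤ (p^2*v*q^2*s) * (m*v*B0^2) :=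
      mul_le_mul_of_nonneg_left I2 (by positivity)
    have h2 : (v^2*p*q*B0^2) * (p*m*(q*s)) ≤ (v^2*p*q*B0^2) * ((u*v)^2) :=
      mul_le_mul_of_nonneg_left K (by positivity)
    nlinarith [h1, h2]
  nlinarith [hT1, hT2, hT3, hT4]

/-- **Log-concavity of the (l,r)-Eulerian numbers.** For integers `r ≥ 1` and `l ≥ 1`, the
array defined by `A(r,r−1) = 1`, `A(n,k) = 0` for `k < r−1` or `k ≥ n`, and
`A(n,k) = (n−k)^l·A(n−1,k−1) + (k+1)^l·A(n−1,k)` for `n > r`, is log-concave in `k` for every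
fixed `n ≥ r`. -/
theorem lr_eulerian_log_concave
    (r : ℤ) (hr : 1 ≤ r) (l : ℕ) (hl : 1 ≤ l)
    (A : ℤ → ℤ → ℝ)
    (hA1 : A r (r - 1) = 1)
    (hA0 : ∀ n k : ℤ, (k < r - 1 ∨ n ≤ k) → A n k = 0)
    (hrec : ∀ n k : ℤ, r < n →
      A n k = ((n : ℝ) - (k : ℝ)) ^ l * A (n - 1) (k - 1) +
        ((k : ℝ) + 1) ^ l * A (n - 1) k) :
    ∀ n k : ℤ, r ≤ n → A n (k - 1) * A n (k + 1) ≤ (A n k) ^ 2 := by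
  have hr' : (1:ℝ) ≤ (r:ℝ) := by exact_mod_cast hr
  -- the strengthened induction
  have key : ∀ n : ℤ, r ≤ n →
      (∀ k : ℤ, 0 ≤ A n k) ∧
      (∀ k : ℤ, r - 1 ≤ k → k ≤ n - 1 → 0 < A n k) ∧
      (∀ k : ℤ, r - 1 ≤ k → k ≤ n - 1 →
        ((n:ℝ) - (k:ℝ) + 1) ^ l * ((k:ℝ) + 2) ^ l * (A n (k-1) * A n (k+1)) ≤
        ((n:ℝ) - (k:ℝ)) ^ l * ((k:ℝ) + 1) ^ l * (A n k) ^ 2) := by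
    refine Int.le_induction ?_ ?_
    · -- base case n = r
      refine ⟨?_, ?_, ?_⟩
      · intro k
        rcases lt_trichotomy k (r-1) with h | h | h
        · rw [hA0 r k (Or.inl h)]
        · rw [h, hA1]; norm_num
        · rw [hA0 r k (Or.inr (by omega))]
      · intro k h1 h2
        have hk : k = r - 1 := by omega
        rw [hk, hA1]; norm_num
      · intro k h1 h2
        obtain rfl : k = r - 1 := by omega
        have hz : A r (r-1-1) = 0 := hA0 _ _ (Or.inl (by omega))
        rw [hz]
        push_cast
        have h0 : (0:ℝ) ≤ ((r:ℝ) - ((r:ℝ) - 1)) ^ l * ((r:ℝ) - 1 + 1) ^ l * (A r (r-1)) ^ 2 := by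
          apply mul_nonneg (mul_nonneg (pow_nonneg (by linarith) l) (pow_nonneg (by linarith) l))
            (sq_nonneg _)
        calc ((r:ℝ) - ((r:ℝ)-1) + 1) ^ l * ((r:ℝ) - 1 + 2) ^ l * (0 * A r (r-1+1)) = 0 := by ring
        _ ≤ _ := h0
    · -- inductive step
      intro n hn ih
      obtain ⟨h0, hpos, hlc⟩ := ih
      have hrn' : (r:ℝ) ≤ (n:ℝ) := by exact_mod_cast hn
      have hrec' : ∀ k : ℤ, A (n+1) k
          = ((n:ℝ) + 1 - (k:ℝ)) ^ l * A n (k-1) + ((k:ℝ) + 1) ^ l * A n k := by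
        intro k
        have h := hrec (n+1) k (by omega)
        rw [show (n+1-1 : ℤ) = n from by ring] at h
        push_cast at h
        exact h
      have h0' : ∀ k : ℤ, 0 ≤ A (n+1) k := by
        intro k
        by_cases hcase : k < r - 1 ∨ n + 1 ≤ k
        · rw [hA0 _ _ hcase]
        · push_neg at hcase
          obtain ⟨hk1, hk2⟩ := hcase
          rw [hrec' k]
          have c1 : (0:ℝ) ≤ (n:ℝ) + 1 - (k:ℝ) := by
            have : (k:ℝ) ≤ (n:ℝ) := by exact_mod_cast (by omega : k ≤ n)
            linarith
          have c2 : (0:ℝ) ≤ (k:ℝ) + 1 := by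
            have : ((r:ℝ) - 1) ≤ (k:ℝ) := by exact_mod_cast hk1
            linarith
          exact add_nonneg (mul_nonneg (pow_nonneg c1 l) (h0 (k-1)))
            (mul_nonneg (pow_nonneg c2 l) (h0 k))
      have hpos' : ∀ k : ℤ, r - 1 ≤ k → k ≤ (n+1) - 1 → 0 < A (n+1) k := by
        intro k hk1 hk2
        rw [hrec' k]
        have hkr : ((r:ℝ) - 1) ≤ (k:ℝ) := by exact_mod_cast hk1
        have c2 : (0:ℝ) < (k:ℝ) + 1 := by linarith
        by_cases hc : k ≤ n - 1
        · have hpk : 0 < A n k := hpos k hk1 hc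
          have c1 : (0:ℝ) ≤ (n:ℝ) + 1 - (k:ℝ) := by
            have : (k:ℝ) ≤ (n:ℝ) := by exact_mod_cast (by omega : k ≤ n)
            linarith
          have h01 := h0 (k-1)
          have : 0 < ((k:ℝ) + 1) ^ l * A n k := by positivity
          nlinarith [mul_nonneg (pow_nonneg c1 l) h01]
        · have hkn : k = n := by omega
          have hz : A n k = 0 := hA0 n k (Or.inr (by omega))
          have hp1 : 0 < A n (k-1) := hpos (k-1) (by omega) (by omega)
          have c1 : (0:ℝ) < (n:ℝ) + 1 - (k:ℝ) := by
            have : (k:ℝ) ≤ (n:ℝ) := by exact_mod_cast (by omega : k ≤ n)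
            linarith
          rw [hz]
          have : (0:ℝ) < ((n:ℝ) + 1 - (k:ℝ)) ^ l * A n (k-1) := by positivity
          nlinarith
      refine ⟨h0', hpos', ?_⟩
      intro k hk1 hk2
      have hkr : ((r:ℝ) - 1) ≤ (k:ℝ) := by exact_mod_cast hk1
      push_cast
      rw [show ((n:ℝ) + 1 - (k:ℝ) + 1) = (n:ℝ) + 2 - (k:ℝ) from by ring]
      by_cases hc : k ≤ n - 1
      · -- main case: use the algebraic lemma
        have hkn : (k:ℝ) ≤ (n:ℝ) - 1 := by exact_mod_cast hc
        -- recurrence equations in atom form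
        have e0 := hrec' k
        have em : A (n+1) (k-1)
            = ((n:ℝ) + 2 - (k:ℝ)) ^ l * A n (k-2) + ((k:ℝ)) ^ l * A n (k-1) := by
          have h := hrec' (k-1)
          rw [show (k-1-1 : ℤ) = k-2 from by ring] at h
          push_cast at h
          rw [show ((n:ℝ) + 1 - ((k:ℝ) - 1)) = (n:ℝ) + 2 - (k:ℝ) from by ring,
            show ((k:ℝ) - 1 + 1) = (k:ℝ) from by ring] at h
          exact h
        have ep : A (n+1) (k+1)
            = ((n:ℝ) - (k:ℝ)) ^ l * A n k + ((k:ℝ) + 2) ^ l * A n (k+1) := by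
          have h := hrec' (k+1)
          rw [show (k+1-1 : ℤ) = k from by ring] at h
          push_cast at h
          rw [show ((n:ℝ) + 1 - ((k:ℝ) + 1)) = (n:ℝ) - (k:ℝ) from by ring,
            show ((k:ℝ) + 1 + 1) = (k:ℝ) + 2 from by ring] at h
          exact h
        rw [e0, em, ep]
        -- base positivity facts
        have b1 : (0:ℝ) < (n:ℝ) + 1 - (k:ℝ) := by linarith
        have b2 : (0:ℝ) < (n:ℝ) + 2 - (k:ℝ) := by linarith
        have b3 : (0:ℝ) ≤ (n:ℝ) - (k:ℝ) := by linarith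
        have b4 : (0:ℝ) < (k:ℝ) + 1 := by linarith
        have b5 : (0:ℝ) < (k:ℝ) + 2 := by linarith
        have b6 : (0:ℝ) ≤ (k:ℝ) := by linarith
        -- the two instances of the inductive log-concavity
        have I2 : ((n:ℝ) + 1 - (k:ℝ)) ^ l * ((k:ℝ) + 2) ^ l * (A n (k-1) * A n (k+1)) ≤
            ((n:ℝ) - (k:ℝ)) ^ l * ((k:ℝ) + 1) ^ l * (A n k) ^ 2 := by
          have h := hlc k hk1 hc
          rw [show ((n:ℝ) - (k:ℝ) + 1) = (n:ℝ) + 1 - (k:ℝ) from by ring] at h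
          exact h
        have I1 : ((n:ℝ) + 2 - (k:ℝ)) ^ l * ((k:ℝ) + 1) ^ l * (A n (k-2) * A n k) ≤
            ((n:ℝ) + 1 - (k:ℝ)) ^ l * ((k:ℝ)) ^ l * (A n (k-1)) ^ 2 := by
          by_cases hrk : r ≤ k
          · have h := hlc (k-1) (by omega) (by omega)
            rw [show (k-1-1 : ℤ) = k-2 from by ring, show (k-1+1 : ℤ) = k from by ring] at h
            push_cast at h
            rw [show ((n:ℝ) - ((k:ℝ) - 1) + 1) = (n:ℝ) + 2 - (k:ℝ) from by ring,
              show ((k:ℝ) - 1 + 2) = (k:ℝ) + 1 from by ring,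
              show ((n:ℝ) - ((k:ℝ) - 1)) = (n:ℝ) + 1 - (k:ℝ) from by ring,
              show ((k:ℝ) - 1 + 1) = (k:ℝ) from by ring] at h
            exact h
          · have hz : A n (k-2) = 0 := hA0 _ _ (Or.inl (by omega))
            rw [hz]
            have : (0:ℝ) ≤ ((n:ℝ) + 1 - (k:ℝ)) ^ l * ((k:ℝ)) ^ l * (A n (k-1)) ^ 2 := by
              exact mul_nonneg (mul_nonneg (pow_nonneg b1.le l) (pow_nonneg b6 l)) (sq_nonneg _)
            nlinarith [this]
        have I3 : ((n:ℝ) + 1 - (k:ℝ)) ^ l * ((n:ℝ) + 2 - (k:ℝ)) ^ l * ((k:ℝ) + 1) ^ l *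
              ((k:ℝ) + 2) ^ l * (A n (k-2) * A n (k+1)) ≤
            ((n:ℝ) + 1 - (k:ℝ)) ^ l * ((k:ℝ) + 1) ^ l * ((n:ℝ) - (k:ℝ)) ^ l * ((k:ℝ)) ^ l *
              (A n (k-1) * A n k) := by
          by_cases h10 : 0 < A n (k-1) * A n k
          · have hmul := mul_le_mul I1 I2
              (mul_nonneg (mul_nonneg (pow_nonneg b1.le l) (pow_nonneg b5.le l))
                (mul_nonneg (h0 (k-1)) (h0 (k+1))))
              (mul_nonneg (mul_nonneg (pow_nonneg b1.le l) (pow_nonneg b6 l)) (sq_nonneg _))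
            apply le_of_mul_le_mul_right _ h10
            nlinarith [hmul]
          · have hB0 : 0 < A n k := hpos k hk1 hc
            have hB1 : A n (k-1) = 0 := by
              rcases mul_eq_zero.mp (le_antisymm (le_of_not_gt h10)
                (mul_nonneg (h0 (k-1)) (h0 k))) with h | h
              · exact h
              · exact absurd h (ne_of_gt hB0)
            have hkr1 : k = r - 1 := by
              by_contra hne
              have : 0 < A n (k-1) := hpos (k-1) (by omega) (by omega)
              rw [hB1] at this; exact absurd this (lt_irrefl 0)
            have hB2 : A n (k-2) = 0 := hA0 _ _ (Or.inl (by omega))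
            rw [hB1, hB2]
            simp
        have K : ((n:ℝ) + 2 - (k:ℝ)) ^ l * ((n:ℝ) - (k:ℝ)) ^ l *
              (((k:ℝ) + 2) ^ l * ((k:ℝ)) ^ l) ≤
            (((n:ℝ) + 1 - (k:ℝ)) ^ l * ((k:ℝ) + 1) ^ l) ^ 2 := by
          have hbase : (((n:ℝ) + 2 - (k:ℝ)) * ((n:ℝ) - (k:ℝ))) * (((k:ℝ) + 2) * ((k:ℝ))) ≤
              ((((n:ℝ) + 1 - (k:ℝ)) * ((k:ℝ) + 1))) ^ 2 := by nlinarith [b1, b4]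
          have h0b : (0:ℝ) ≤ (((n:ℝ) + 2 - (k:ℝ)) * ((n:ℝ) - (k:ℝ))) * (((k:ℝ) + 2) * ((k:ℝ))) :=
            mul_nonneg (mul_nonneg b2.le b3) (mul_nonneg b5.le b6)
          have hK0 := pow_le_pow_left₀ h0b hbase l
          have e1 : ((((n:ℝ) + 2 - (k:ℝ)) * ((n:ℝ) - (k:ℝ))) * (((k:ℝ) + 2) * ((k:ℝ)))) ^ l
              = ((n:ℝ) + 2 - (k:ℝ)) ^ l * ((n:ℝ) - (k:ℝ)) ^ l *
                (((k:ℝ) + 2) ^ l * ((k:ℝ)) ^ l) := by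
            rw [mul_pow, mul_pow, mul_pow]
          have e2 : (((((n:ℝ) + 1 - (k:ℝ)) * ((k:ℝ) + 1))) ^ 2) ^ l
              = (((n:ℝ) + 1 - (k:ℝ)) ^ l * ((k:ℝ) + 1) ^ l) ^ 2 := by
            rw [← pow_mul, mul_comm 2 l, pow_mul, mul_pow]
          rw [e1, e2] at hK0
          exact hK0
        exact lr_step_ineq _ _ _ _ _ _ _ _ _ _
          (pow_nonneg b1.le l) (pow_nonneg b2.le l) (pow_nonneg b3 l)
          (pow_nonneg b4.le l) (pow_nonneg b5.le l) (pow_nonneg b6 l)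
          (h0 (k-2)) (h0 (k-1)) (h0 k) (h0 (k+1))
          (by positivity) I1 I2 I3 K
      · -- boundary case k = n
        have hkn : k = n := by omega
        have hz : A (n+1) (k+1) = 0 := hA0 _ _ (Or.inr (by omega))
        rw [hz]
        have hknR : (k:ℝ) ≤ (n:ℝ) := by exact_mod_cast (by omega : k ≤ n)
        have : (0:ℝ) ≤ ((n:ℝ) + 1 - (k:ℝ)) ^ l * ((k:ℝ) + 1) ^ l * (A (n+1) k) ^ 2 :=
          mul_nonneg (mul_nonneg (pow_nonneg (by linarith) l) (pow_nonneg (by linarith) l))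
            (sq_nonneg _)
        nlinarith [this]
  -- conclude the plain log-concavity
  intro n k hn
  obtain ⟨h0, hpos, hlc⟩ := key n hn
  by_cases hk1 : r - 1 ≤ k
  · by_cases hk2 : k ≤ n - 1
    · have H := hlc k hk1 hk2
      have hkr : ((r:ℝ) - 1) ≤ (k:ℝ) := by exact_mod_cast hk1
      have hkn : (k:ℝ) ≤ (n:ℝ) - 1 := by exact_mod_cast hk2
      have c1 : (0:ℝ) < ((n:ℝ) - (k:ℝ)) ^ l * ((k:ℝ) + 1) ^ l := by
        have b1 : (0:ℝ) < (n:ℝ) - (k:ℝ) := by linarith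
        have b2 : (0:ℝ) < (k:ℝ) + 1 := by linarith
        positivity
      have d1 : ((n:ℝ) - (k:ℝ)) ^ l ≤ ((n:ℝ) - (k:ℝ) + 1) ^ l := by
        apply pow_le_pow_left₀ (by linarith) (by linarith)
      have d2 : ((k:ℝ) + 1) ^ l ≤ ((k:ℝ) + 2) ^ l := by
        apply pow_le_pow_left₀ (by linarith) (by linarith)
      have c12 : ((n:ℝ) - (k:ℝ)) ^ l * ((k:ℝ) + 1) ^ l ≤
          ((n:ℝ) - (k:ℝ) + 1) ^ l * ((k:ℝ) + 2) ^ l := by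
        apply mul_le_mul d1 d2 (pow_nonneg (by linarith) l)
          (pow_nonneg (by linarith) l)
      have hprod : (0:ℝ) ≤ A n (k-1) * A n (k+1) := mul_nonneg (h0 (k-1)) (h0 (k+1))
      have step : ((n:ℝ) - (k:ℝ)) ^ l * ((k:ℝ) + 1) ^ l * (A n (k-1) * A n (k+1)) ≤
          ((n:ℝ) - (k:ℝ)) ^ l * ((k:ℝ) + 1) ^ l * (A n k) ^ 2 :=
        le_trans (mul_le_mul_of_nonneg_right c12 hprod) H
      exact le_of_mul_le_mul_left step c1
    · have hz : A n (k+1) = 0 := hA0 _ _ (Or.inr (by omega))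
      rw [hz, mul_zero]
      exact sq_nonneg _
  · have hz : A n (k-1) = 0 := hA0 _ _ (Or.inl (by omega))
    rw [hz, zero_mul]
    exact sq_nonneg _
end

section
/- Fix integers l ≥ 1 and r ≥ 1. For n ≥ 1 and k ≥ 0, let E(n,k) denote the number of l-tuples (f_1,…,f_l) of subexceedant functions on [n] such that {1,…,r} ⊆ bl(f_1), |bl(f_1)| = k+1, and bl(f_1) = ⋯ = bl(f_l), and set E(n,−1) = 0. Then for all n ≥ r+1 and all k ≥ 0, E(n,k) = (n−k)^l·E(n−1,k−1) + (k+1)^l·E(n−1,k). -/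
/-!
All `f_m` in a tuple share one leader set `S`, so `E(n,k) = ∑_S N(S)^l`, where `N(S)` counts the
subexceedant functions with leader set `S` and `S` runs over the `(k+1)`-sets containing
`{1,…,r}`. A subexceedant function on `[n+1]` is a subexceedant `g` on `[n]` together with a
value `v ∈ [n+1]` at `n+1`; its leaders are those of `g`, plus `n+1` exactly when `v` is outside
the image of `g`, which has `|bl(g)|` elements. Hence, for `S ⊆ [n]`,
`N_{n+1}(S ∪ {n+1}) = (n+1-|S|) N_n(S)` and `N_{n+1}(S) = |S| N_n(S)`, and splitting the sum
according to whether `n+1` is a leader gives the recurrence.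
-/

/-- The block-leader set of a function `f` on `Fin n` (0-indexed version of `[n]`):
the set of indices `i` such that `f i` is not attained at any earlier index. -/
def blFun {n : ℕ} (f : Fin n → Fin n) : Finset (Fin n) :=
  Finset.univ.filter (fun i => ∀ j, j < i → f j ≠ f i)

/-- `lrEulerCount l r n k` is the number of `l`-tuples `(f₁,…,f_l)` of subexceedant functions
on `[n]` (0-indexed: `f i ≤ i`) such that `{1,…,r}` (0-indexed: indices `< r`) is contained in
`bl(f₁)`, `|bl(f₁)| = k + 1`, and `bl(f₁) = ⋯ = bl(f_l)`; it is `0` for `k < 0`. -/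
noncomputable def lrEulerCount (l r n : ℕ) (k : ℤ) : ℕ :=
  if k < 0 then 0
  else Nat.card {F : Fin l → Fin n → Fin n //
    (∀ m i, F m i ≤ i) ∧
    (∀ m, ∀ i : Fin n, (i : ℕ) < r → i ∈ blFun (F m)) ∧
    (∀ m, (blFun (F m)).card = k.toNat + 1) ∧
    (∀ m m', blFun (F m) = blFun (F m'))}

open Finset

namespace LrEuler

variable {l r n : ℕ}

lemma mem_blFun {f : Fin n → Fin n} {i : Fin n} : i ∈ blFun f ↔ ∀ j < i, f j ≠ f i := by
  simp [blFun]

lemma exists_mem_blFun_apply_eq (f : Fin n → Fin n) (i : Fin n) :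
    ∃ j ∈ blFun f, f j = f i := by
  induction i using WellFoundedLT.induction with
  | _ i ih =>
    by_cases hi : i ∈ blFun f
    · exact ⟨i, hi, rfl⟩
    · obtain ⟨j, hji, hj⟩ : ∃ j < i, f j = f i := by simpa [mem_blFun] using hi
      obtain ⟨j', hj', hfj'⟩ := ih j hji
      exact ⟨j', hj', hfj'.trans hj⟩

lemma injOn_blFun (f : Fin n → Fin n) : Set.InjOn f (blFun f) := by
  intro i hi j hj hij
  by_contra hne
  rcases lt_or_gt_of_ne hne with h | h
  · exact mem_blFun.mp hj i h hij
  · exact mem_blFun.mp hi j h hij.symm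

lemma card_image_univ_eq_card_blFun (f : Fin n → Fin n) : #(univ.image f) = #(blFun f) := by
  have himage : univ.image f = (blFun f).image f := by
    ext x
    simp only [mem_image, mem_univ, true_and]
    constructor
    · rintro ⟨i, rfl⟩
      exact exists_mem_blFun_apply_eq f i
    · rintro ⟨j, -, hj⟩
      exact ⟨j, hj⟩
  rw [himage, card_image_of_injOn (injOn_blFun f)]

def snocCastSucc (g : Fin n → Fin n) (v : Fin (n + 1)) : Fin (n + 1) → Fin (n + 1) :=
  Fin.snoc (fun i => (g i).castSucc) v

@[simp] lemma snocCastSucc_castSucc (g : Fin n → Fin n) (v : Fin (n + 1)) (i : Fin n) :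
    snocCastSucc g v i.castSucc = (g i).castSucc := Fin.snoc_castSucc ..

@[simp] lemma snocCastSucc_last (g : Fin n → Fin n) (v : Fin (n + 1)) :
    snocCastSucc g v (Fin.last n) = v := Fin.snoc_last ..

lemma snocCastSucc_injective2 : Function.Injective2 (snocCastSucc (n := n)) := by
  intro g g' v v' h
  have := Fin.snoc_injective2 h
  exact ⟨funext fun i => Fin.castSucc_injective n (congrFun this.1 i), this.2⟩

lemma snocCastSucc_le_iff (g : Fin n → Fin n) (v : Fin (n + 1)) :
    (∀ i, snocCastSucc g v i ≤ i) ↔ ∀ i, g i ≤ i := by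
  simp [Fin.forall_fin_succ', Fin.le_last]

lemma exists_snocCastSucc_eq {f : Fin (n + 1) → Fin (n + 1)} (hf : ∀ i, f i ≤ i) :
    ∃ g : Fin n → Fin n, snocCastSucc g (f (Fin.last n)) = f := by
  refine ⟨fun i => (f i.castSucc).castLT (lt_of_le_of_lt (hf i.castSucc) i.isLt), ?_⟩
  funext i
  induction i using Fin.lastCases with
  | last => simp
  | cast i => simp

lemma castSucc_mem_blFun_snocCastSucc (g : Fin n → Fin n) (v : Fin (n + 1)) (i : Fin n) :
    i.castSucc ∈ blFun (snocCastSucc g v) ↔ i ∈ blFun g := by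
  simp [mem_blFun, Fin.forall_fin_succ', Fin.castSucc_lt_castSucc_iff,
    not_lt.mpr (Fin.le_last _)]

lemma last_mem_blFun_snocCastSucc (g : Fin n → Fin n) (v : Fin (n + 1)) :
    Fin.last n ∈ blFun (snocCastSucc g v) ↔ v ∉ univ.image (fun i => (g i).castSucc) := by
  simp [mem_blFun, Fin.forall_fin_succ', Fin.castSucc_lt_last]

lemma blFun_snocCastSucc_eq_map_iff (g : Fin n → Fin n) (v : Fin (n + 1)) (T : Finset (Fin n)) :
    blFun (snocCastSucc g v) = T.map Fin.castSuccEmb ↔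
      blFun g = T ∧ v ∈ univ.image (fun i => (g i).castSucc) := by
  rw [Finset.ext_iff, Fin.forall_fin_succ', Finset.ext_iff]
  simp only [castSucc_mem_blFun_snocCastSucc, last_mem_blFun_snocCastSucc]
  simp

lemma blFun_snocCastSucc_eq_insert_iff (g : Fin n → Fin n) (v : Fin (n + 1))
    (T : Finset (Fin n)) :
    blFun (snocCastSucc g v) = insert (Fin.last n) (T.map Fin.castSuccEmb) ↔
      blFun g = T ∧ v ∉ univ.image (fun i => (g i).castSucc) := by
  rw [Finset.ext_iff, Fin.forall_fin_succ', Finset.ext_iff]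
  simp only [castSucc_mem_blFun_snocCastSucc, last_mem_blFun_snocCastSucc]
  simp

lemma card_image_castSucc_eq_card_blFun (g : Fin n → Fin n) :
    #(univ.image fun i => (g i).castSucc) = #(blFun g) := by
  rw [← card_image_univ_eq_card_blFun, ← card_image_of_injective _ (Fin.castSucc_injective n),
    image_image]
  rfl

def leaderFiber (S : Finset (Fin n)) : Finset (Fin n → Fin n) :=
  univ.filter fun f => (∀ i, f i ≤ i) ∧ blFun f = S

lemma card_leaderFiber_succ (S : Finset (Fin (n + 1))) :
    #(leaderFiber S) = ∑ g ∈ univ.filter (fun g : Fin n → Fin n => ∀ i, g i ≤ i),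
      #(univ.filter fun v => blFun (snocCastSucc g v) = S) := by
  rw [← card_sigma]
  symm
  refine card_bij (fun p _ => snocCastSucc p.1 p.2) ?_ ?_ ?_
  · rintro ⟨g, v⟩ hp
    simp only [mem_sigma, mem_filter, mem_univ, true_and] at hp
    simpa [leaderFiber, snocCastSucc_le_iff] using hp
  · rintro ⟨g, v⟩ - ⟨g', v'⟩ - h
    obtain ⟨rfl, rfl⟩ := snocCastSucc_injective2 h
    rfl
  · intro f hf
    simp only [leaderFiber, mem_filter, mem_univ, true_and] at hf
    obtain ⟨g, hg⟩ := exists_snocCastSucc_eq hf.1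
    refine ⟨⟨g, f (Fin.last n)⟩, ?_, hg⟩
    rw [← hg] at hf
    simpa [snocCastSucc_le_iff] using hf

lemma card_leaderFiber_map_castSucc (T : Finset (Fin n)) :
    #(leaderFiber (T.map Fin.castSuccEmb)) = #T * #(leaderFiber T) := by
  simp_rw [card_leaderFiber_succ, blFun_snocCastSucc_eq_map_iff]
  calc _ = ∑ g ∈ univ.filter (fun g : Fin n → Fin n => ∀ i, g i ≤ i),
        if blFun g = T then #T else 0 := by
        refine sum_congr rfl fun g _ => ?_
        split_ifs with hg
        · simp [hg, card_image_castSucc_eq_card_blFun]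
        · simp [hg]
    _ = #T * #(leaderFiber T) := by
        rw [sum_ite, sum_const_zero, add_zero, sum_const, smul_eq_mul, mul_comm, leaderFiber,
          filter_filter]

lemma card_leaderFiber_insert_last (T : Finset (Fin n)) :
    #(leaderFiber (insert (Fin.last n) (T.map Fin.castSuccEmb))) =
      (n + 1 - #T) * #(leaderFiber T) := by
  simp_rw [card_leaderFiber_succ, blFun_snocCastSucc_eq_insert_iff]
  calc _ = ∑ g ∈ univ.filter (fun g : Fin n → Fin n => ∀ i, g i ≤ i),
        if blFun g = T then n + 1 - #T else 0 := by
        refine sum_congr rfl fun g _ => ?_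
        split_ifs with hg
        · simp only [hg, true_and]
          rw [filter_not, filter_mem_eq_inter, univ_inter, ← compl_eq_univ_sdiff, card_compl,
            Fintype.card_fin, card_image_castSucc_eq_card_blFun, hg]
        · simp [hg]
    _ = (n + 1 - #T) * #(leaderFiber T) := by
        rw [sum_ite, sum_const_zero, add_zero, sum_const, smul_eq_mul, mul_comm, leaderFiber,
          filter_filter]

def leaderSets (r n c : ℕ) : Finset (Finset (Fin n)) :=
  univ.filter fun S => (∀ i : Fin n, (i : ℕ) < r → i ∈ S) ∧ #S = c

def leaderPowerSum (l r n c : ℕ) : ℕ :=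
  ∑ S ∈ leaderSets r n c, #(leaderFiber S) ^ l

lemma powerset_map_castSuccEmb :
    (univ.map Fin.castSuccEmb : Finset (Fin (n + 1))).powerset =
      (univ : Finset (Finset (Fin n))).map (mapEmbedding Fin.castSuccEmb).toEmbedding := by
  ext t
  simp [subset_map_iff, eq_comm]

lemma sum_leaderSets_succ {M : Type*} [AddCommMonoid M] (hr : r ≤ n) (c : ℕ)
    (φ : Finset (Fin (n + 1)) → M) :
    ∑ S ∈ leaderSets r (n + 1) (c + 1), φ S =
      ∑ T ∈ leaderSets r n (c + 1), φ (T.map Fin.castSuccEmb) +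
        ∑ T ∈ leaderSets r n c, φ (insert (Fin.last n) (T.map Fin.castSuccEmb)) := by
  rw [leaderSets, sum_filter, ← powerset_univ, Fin.univ_castSuccEmb, cons_eq_insert,
    sum_powerset_insert (by simp), powerset_map_castSuccEmb, sum_map, sum_map, leaderSets,
    leaderSets, sum_filter, sum_filter]
  have hlast : ¬ (n < r) := not_lt.mpr hr
  congr 1 <;> refine sum_congr rfl fun T _ => if_congr ?_ rfl rfl <;>
    simp [Fin.forall_fin_succ', hlast]

lemma leaderPowerSum_succ_succ (hr : r ≤ n) (c : ℕ) :
    (leaderPowerSum l r (n + 1) (c + 1) : ℤ) =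
      ((c : ℤ) + 1) ^ l * leaderPowerSum l r n (c + 1) +
        ((n : ℤ) + 1 - c) ^ l * leaderPowerSum l r n c := by
  rw [leaderPowerSum, sum_leaderSets_succ hr, leaderPowerSum, leaderPowerSum]
  push_cast
  rw [mul_sum, mul_sum]
  congr 1 <;> refine sum_congr rfl fun T hT => ?_ <;>
    obtain ⟨-, hcard⟩ := (mem_filter.mp hT).2
  · rw [card_leaderFiber_map_castSucc, hcard, Nat.cast_mul, mul_pow]
    push_cast
    ring
  · have hc : c ≤ n + 1 := by
      have := card_le_univ T
      rw [Fintype.card_fin] at this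
      omega
    rw [card_leaderFiber_insert_last, hcard, Nat.cast_mul, mul_pow]
    push_cast [hc]
    ring

lemma leaderPowerSum_zero (hr : 0 < r) (hrn : r ≤ n) : leaderPowerSum l r n 0 = 0 := by
  refine sum_eq_zero fun S hS => ?_
  obtain ⟨hprefix, hcard⟩ := (mem_filter.mp hS).2
  rw [card_eq_zero] at hcard
  exact absurd (hprefix ⟨0, by omega⟩ hr) (by simp [hcard])

lemma lrEulerCount_natCast (hl : 1 ≤ l) (k : ℕ) :
    lrEulerCount l r n k = leaderPowerSum l r n (k + 1) := by
  rw [lrEulerCount, if_neg (by omega), Int.toNat_natCast, Nat.card_eq_fintype_card,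
    Fintype.card_subtype, leaderPowerSum]
  let m₀ : Fin l := ⟨0, hl⟩
  have htuples : univ.filter (fun F : Fin l → Fin n → Fin n =>
      (∀ m i, F m i ≤ i) ∧ (∀ m, ∀ i : Fin n, (i : ℕ) < r → i ∈ blFun (F m)) ∧
        (∀ m, #(blFun (F m)) = k + 1) ∧ ∀ m m', blFun (F m) = blFun (F m')) =
      (leaderSets r n (k + 1)).biUnion fun S => Fintype.piFinset fun _ => leaderFiber S := by
    ext F
    simp only [mem_filter, mem_univ, true_and, mem_biUnion, Fintype.mem_piFinset, leaderSets,
      leaderFiber]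
    constructor
    · rintro ⟨hle, hprefix, hcard, hbl⟩
      exact ⟨blFun (F m₀), ⟨hprefix m₀, hcard m₀⟩, fun m => ⟨hle m, hbl m m₀⟩⟩
    · rintro ⟨S, ⟨hprefix, hcard⟩, hF⟩
      exact ⟨fun m => (hF m).1, fun m => (hF m).2 ▸ hprefix, fun m => (hF m).2 ▸ hcard,
        fun m m' => (hF m).2.trans (hF m').2.symm⟩
  rw [htuples, card_biUnion]
  · simp only [Fintype.card_piFinset_const]
  · intro S _ S' _ hne
    refine disjoint_left.mpr fun F hF hF' => hne ?_
    simp only [Fintype.mem_piFinset, leaderFiber, mem_filter] at hF hF'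
    exact (hF m₀).2.2.symm.trans (hF' m₀).2.2

lemma lrEulerCount_natCast_sub_one (hl : 1 ≤ l) (hr : 0 < r) (hrn : r ≤ n) (k : ℕ) :
    lrEulerCount l r n (k - 1) = leaderPowerSum l r n k := by
  cases k with
  | zero => rw [leaderPowerSum_zero hr hrn, lrEulerCount, if_pos (by omega)]
  | succ k => rw [Nat.cast_succ, add_sub_cancel_right, lrEulerCount_natCast hl]

end LrEuler

/-- **Recurrence for the (l,r)-Eulerian numbers.** For `n ≥ r + 1` and `k ≥ 0`,
`E(n,k) = (n−k)^l·E(n−1,k−1) + (k+1)^l·E(n−1,k)`. -/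
theorem lrEulerCount_recurrence (l r : ℕ) (hl : 1 ≤ l) (hr : 1 ≤ r) :
    ∀ (n : ℕ) (k : ℤ), r + 1 ≤ n → 0 ≤ k →
      (lrEulerCount l r n k : ℤ) =
        ((n : ℤ) - k) ^ l * (lrEulerCount l r (n - 1) (k - 1) : ℤ) +
          (k + 1) ^ l * (lrEulerCount l r (n - 1) k : ℤ) := by
  intro n k hn hk
  lift k to ℕ using hk
  obtain ⟨n, rfl⟩ : ∃ m, n = m + 1 := ⟨n - 1, by omega⟩
  rw [Nat.add_sub_cancel, LrEuler.lrEulerCount_natCast hl, LrEuler.lrEulerCount_natCast hl,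
    LrEuler.lrEulerCount_natCast_sub_one hl hr (by omega),
    LrEuler.leaderPowerSum_succ_succ (by omega)]
  push_cast
  ring
end

section
/- Let l be a positive integer, and for n ≥ 1 let 𝒜_n^{(l)}(s,t) = Σ_{k=0}^{n−1} A^{(l)}(n,k)·s^k·t^{n−1−k} ∈ ℚ[s,t], where A^{(l)} is the (l,1)-Eulerian array. Let D_s = s·∂/∂s and D_t = t·∂/∂t be the Euler derivations on ℚ[s,t]. Then for every n ≥ 2, s·t·𝒜_n^{(l)}(s,t) = t·D_s^l(s·t·𝒜_{n−1}^{(l)}(s,t)) + s·D_t^l(s·t·𝒜_{n−1}^{(l)}(s,t)). -/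
open MvPolynomial

/-- The bivariate polynomial `𝒜_n(s,t) = Σ_{k=0}^{n−1} A(n,k)·s^k·t^(n−1−k) ∈ ℚ[s,t]`,
where `s = X 0` and `t = X 1`. -/
noncomputable def biEulerPoly (A : ℤ → ℤ → ℚ) (n : ℕ) : MvPolynomial (Fin 2) ℚ :=
  ∑ k ∈ Finset.range n, C (A (n : ℤ) (k : ℤ)) * X 0 ^ k * X 1 ^ (n - 1 - k)

/-- The Euler derivation `D_s = s·∂/∂s` on `ℚ[s,t]`. -/
noncomputable def eulerDs (p : MvPolynomial (Fin 2) ℚ) : MvPolynomial (Fin 2) ℚ :=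
  X 0 * pderiv 0 p

/-- The Euler derivation `D_t = t·∂/∂t` on `ℚ[s,t]`. -/
noncomputable def eulerDt (p : MvPolynomial (Fin 2) ℚ) : MvPolynomial (Fin 2) ℚ :=
  X 1 * pderiv 1 p

lemma eulerDs_mono (c : ℚ) (a b : ℕ) :
    eulerDs (C c * X 0 ^ a * X 1 ^ b) = C ((a:ℚ) * c) * X 0 ^ a * X 1 ^ b := by
  cases a with
  | zero => simp [eulerDs]
  | succ m =>
    simp only [eulerDs, Derivation.leibniz, Derivation.leibniz_pow, pderiv_C, pderiv_X_self,
      pderiv_X_of_ne (show (1:Fin 2) ≠ 0 by decide), smul_eq_mul, mul_zero, zero_mul, add_zero,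
      zero_add, mul_one, Nat.add_sub_cancel_left, Nat.add_sub_cancel, map_mul, map_natCast,
      map_add, map_one]
    push_cast
    ring

lemma eulerDt_mono (c : ℚ) (a b : ℕ) :
    eulerDt (C c * X 0 ^ a * X 1 ^ b) = C ((b:ℚ) * c) * X 0 ^ a * X 1 ^ b := by
  cases b with
  | zero => simp [eulerDt]
  | succ m =>
    simp only [eulerDt, Derivation.leibniz, Derivation.leibniz_pow, pderiv_C, pderiv_X_self,
      pderiv_X_of_ne (show (0:Fin 2) ≠ 1 by decide), smul_eq_mul, mul_zero, zero_mul, add_zero,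
      zero_add, mul_one, Nat.add_sub_cancel_left, Nat.add_sub_cancel, map_mul, map_natCast,
      map_add, map_one]
    push_cast
    ring

lemma eulerDs_iter (l : ℕ) (c : ℚ) (a b : ℕ) :
    eulerDs^[l] (C c * X 0 ^ a * X 1 ^ b) = C ((a:ℚ)^l * c) * X 0 ^ a * X 1 ^ b := by
  induction l generalizing c with
  | zero => simp
  | succ m ih =>
    rw [Function.iterate_succ_apply, eulerDs_mono, ih]
    rw [show (a:ℚ)^m * ((a:ℚ)*c) = (a:ℚ)^(m+1)*c by ring]

lemma eulerDt_iter (l : ℕ) (c : ℚ) (a b : ℕ) :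
    eulerDt^[l] (C c * X 0 ^ a * X 1 ^ b) = C ((b:ℚ)^l * c) * X 0 ^ a * X 1 ^ b := by
  induction l generalizing c with
  | zero => simp
  | succ m ih =>
    rw [Function.iterate_succ_apply, eulerDt_mono, ih]
    rw [show (b:ℚ)^m * ((b:ℚ)*c) = (b:ℚ)^(m+1)*c by ring]

lemma eulerDs_iter_sum {ι : Type*} (s : Finset ι) (f : ι → MvPolynomial (Fin 2) ℚ) (l : ℕ) :
    eulerDs^[l] (∑ i ∈ s, f i) = ∑ i ∈ s, eulerDs^[l] (f i) := by
  induction l with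
  | zero => simp
  | succ m ih =>
    simp only [Function.iterate_succ_apply', ih]
    simp [eulerDs, map_sum, Finset.mul_sum]

lemma eulerDt_iter_sum {ι : Type*} (s : Finset ι) (f : ι → MvPolynomial (Fin 2) ℚ) (l : ℕ) :
    eulerDt^[l] (∑ i ∈ s, f i) = ∑ i ∈ s, eulerDt^[l] (f i) := by
  induction l with
  | zero => simp
  | succ m ih =>
    simp only [Function.iterate_succ_apply', ih]
    simp [eulerDt, map_sum, Finset.mul_sum]

/-- **Differential recurrence for the bivariate (l,1)-Eulerian polynomials.** Let `l ≥ 1` and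
let `A(n,k)` be the `(l,1)`-Eulerian array. Then for every `n ≥ 2`,
`s·t·𝒜_n(s,t) = t·D_s^l(s·t·𝒜_{n−1}(s,t)) + s·D_t^l(s·t·𝒜_{n−1}(s,t))`. -/
theorem biEulerPoly_differential_recurrence
    (l : ℕ) (hl : 1 ≤ l) (A : ℤ → ℤ → ℚ)
    (hA1 : A 1 0 = 1)
    (hA0 : ∀ n k : ℤ, 1 ≤ n → (k < 0 ∨ n ≤ k) → A n k = 0)
    (hrec : ∀ n k : ℤ, 2 ≤ n → 0 ≤ k → k ≤ n - 1 →
      A n k = ((k : ℚ) + 1) ^ l * A (n - 1) k + ((n : ℚ) - (k : ℚ)) ^ l * A (n - 1) (k - 1)) :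
    ∀ n : ℕ, 2 ≤ n →
      X 0 * X 1 * biEulerPoly A n =
        X 1 * (eulerDs^[l] (X 0 * X 1 * biEulerPoly A (n - 1))) +
          X 0 * (eulerDt^[l] (X 0 * X 1 * biEulerPoly A (n - 1))) := by
  intro n hn
  obtain ⟨m, rfl⟩ : ∃ m, n = m + 2 := ⟨n - 2, by omega⟩
  have hprev : X 0 * X 1 * biEulerPoly A (m + 2 - 1) =
      ∑ k ∈ Finset.range (m+1), C (A (m+1 : ℕ) (k : ℤ)) * X 0 ^ (k+1) * X 1 ^ (m+1-k) := by
    show X 0 * X 1 * biEulerPoly A (m+1) = _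
    unfold biEulerPoly
    rw [Finset.mul_sum]
    refine Finset.sum_congr rfl fun k hk => ?_
    have hk' : k ≤ m := by simpa using Nat.lt_succ_iff.mp (Finset.mem_range.mp hk)
    rw [show m+1-1-k = m-k from rfl, show m+1-k = (m-k)+1 by omega]
    push_cast
    ring
  rw [hprev, eulerDs_iter_sum, eulerDt_iter_sum]
  simp only [eulerDs_iter, eulerDt_iter]
  rw [Finset.mul_sum, Finset.mul_sum]
  have hrec' : ∀ k : ℕ, k ≤ m+1 → A ((m+2:ℕ):ℤ) ((k:ℕ):ℤ) =
      ((k:ℚ)+1)^l * A ((m+1:ℕ):ℤ) (k:ℤ) + ((m:ℚ)+2-(k:ℚ))^l * A ((m+1:ℕ):ℤ) ((k:ℤ)-1) := by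
    intro k hk
    have h := hrec ((m:ℤ)+2) (k : ℤ) (by omega) (by omega) (by omega)
    rw [show ((m:ℤ)+2)-1 = ((m+1:ℕ):ℤ) by push_cast; ring] at h
    rw [show ((m+2:ℕ):ℤ) = (m:ℤ)+2 by push_cast; ring, h]
    push_cast
    ring_nf
  have hz1 : A ((m+1:ℕ):ℤ) ((m+1:ℕ):ℤ) = 0 := hA0 _ _ (by omega) (Or.inr le_rfl)
  have hz2 : A ((m+1:ℕ):ℤ) ((0:ℤ)-1) = 0 := hA0 _ _ (by omega) (Or.inl (by omega))
  have hLHS : X 0 * X 1 * biEulerPoly A (m + 2) =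
      ∑ k ∈ Finset.range (m+2), C (A ((m+2:ℕ):ℤ) (k:ℤ)) * X 0 ^ (k+1) * X 1 ^ (m+2-k) := by
    unfold biEulerPoly
    rw [Finset.mul_sum]
    refine Finset.sum_congr rfl fun k hk => ?_
    have hk' : k ≤ m+1 := by
      have := Finset.mem_range.mp hk; omega
    rw [show m+2-1-k = m+1-k from rfl, show m+2-k = (m+1-k)+1 by omega]
    ring
  have hsplit : (∑ k ∈ Finset.range (m+2), C (A ((m+2:ℕ):ℤ) (k:ℤ)) * X 0 ^ (k+1) * X 1 ^ (m+2-k)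
        : MvPolynomial (Fin 2) ℚ)
      = (∑ k ∈ Finset.range (m+2),
          C (((k:ℚ)+1)^l * A ((m+1:ℕ):ℤ) (k:ℤ)) * X 0 ^ (k+1) * X 1 ^ (m+2-k))
      + (∑ k ∈ Finset.range (m+2),
          C (((m:ℚ)+2-(k:ℚ))^l * A ((m+1:ℕ):ℤ) ((k:ℤ)-1)) * X 0 ^ (k+1) * X 1 ^ (m+2-k)) := by
    rw [← Finset.sum_add_distrib]
    refine Finset.sum_congr rfl fun k hk => ?_
    have hk' : k ≤ m+1 := by
      have := Finset.mem_range.mp hk; omega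
    rw [hrec' k hk', map_add]
    ring
  refine (hLHS.trans hsplit).trans ?_
  congr 1
  · -- first sums match
    rw [Finset.sum_range_succ, hz1]
    simp only [mul_zero, map_zero, zero_mul, add_zero]
    refine Finset.sum_congr rfl fun k hk => ?_
    have hk' : k ≤ m := by
      have := Finset.mem_range.mp hk; omega
    rw [show m+2-k = (m+1-k)+1 by omega]
    push_cast
    ring
  · -- second sums match
    rw [Finset.sum_range_succ']
    simp only [Nat.cast_zero, hz2, mul_zero, map_zero, zero_mul, mul_zero, add_zero]
    refine Finset.sum_congr rfl fun k hk => ?_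
    have hk' : k ≤ m := by
      have := Finset.mem_range.mp hk; omega
    have hc : ((m+1-k:ℕ):ℚ) = (m:ℚ)+1-(k:ℚ) := by
      push_cast [Nat.cast_sub (by omega : k ≤ m+1)]
      ring
    rw [show m+2-(k+1) = m+1-k by omega, show ((k+1:ℕ):ℤ)-1 = (k:ℤ) by push_cast; ring, hc]
    rw [show (m:ℚ)+2-((k:ℕ)+1:ℕ) = (m:ℚ)+1-(k:ℚ) by push_cast; ring]
    ring
end

section
/- For n ≥ 1 let 𝒜_n^{(2)}(s,t) = Σ_{k=0}^{n−1} A^{(2)}(n,k)·s^k·t^{n−1−k} ∈ ℚ[s,t], where A^{(2)} is the (2,1)-Eulerian array. Then for every n ≥ 2, 𝒜_n^{(2)}(s,t) = (s+t)·𝒜_{n−1}^{(2)}(s,t) + 3st·(∂/∂s + ∂/∂t)𝒜_{n−1}^{(2)}(s,t) + st·(s·∂²/∂s² + t·∂²/∂t²)𝒜_{n−1}^{(2)}(s,t). -/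
open MvPolynomial

private lemma pderiv_X_pow_ne (i j : Fin 2) (h : i ≠ j) (k : ℕ) :
    pderiv i ((X j : MvPolynomial (Fin 2) ℚ) ^ k) = 0 := by
  induction k with
  | zero => simp
  | succ k ih => rw [pow_succ, pderiv_mul, ih]; simp [pderiv_X, Pi.single_eq_of_ne (Ne.symm h)]

private lemma hX1 (i : Fin 2) (k : ℕ) :
    X i * pderiv i ((X i : MvPolynomial (Fin 2) ℚ) ^ k) = C (k : ℚ) * X i ^ k := by
  induction k with
  | zero => simp
  | succ k ih =>
    rw [pow_succ, pderiv_mul, pderiv_X_self]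
    push_cast
    rw [mul_add]
    calc X i * (pderiv i (X i ^ k) * X i) + X i * (X i ^ k * 1)
        = (X i * pderiv i (X i ^ k)) * X i + X i ^ (k+1) := by ring
      _ = C (k : ℚ) * X i ^ k * X i + X i ^ (k+1) := by rw [ih]
      _ = (C (k : ℚ) + 1) * X i ^ (k+1) := by ring
      _ = C ((k : ℚ) + 1) * X i ^ (k+1) := by simp

private lemma hX2 (i : Fin 2) (k : ℕ) :
    X i ^ 2 * pderiv i (pderiv i ((X i : MvPolynomial (Fin 2) ℚ) ^ k)) =
      C ((k : ℚ) * ((k : ℚ) - 1)) * X i ^ k := by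
  induction k with
  | zero => simp
  | succ k ih =>
    rw [pow_succ (X i) k, pderiv_mul, pderiv_X_self, map_add, pderiv_mul, pderiv_X_self]
    have h1 := hX1 i k
    calc X i ^ 2 * (pderiv i (pderiv i (X i ^ k)) * X i + pderiv i (X i ^ k) * 1
            + pderiv i (X i ^ k * 1))
        = (X i ^ 2 * pderiv i (pderiv i (X i ^ k))) * X i
            + 2 * (X i * pderiv i (X i ^ k)) * X i := by
          rw [mul_one]; ring
      _ = C ((k : ℚ) * ((k : ℚ) - 1)) * X i ^ k * X i + 2 * (C (k : ℚ) * X i ^ k) * X i := by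
          rw [ih, h1]
      _ = (C ((k : ℚ) * ((k : ℚ) - 1)) + 2 * C (k : ℚ)) * X i ^ (k + 1) := by ring
      _ = C ((((k : ℕ) + 1 : ℕ) : ℚ) * ((((k : ℕ) + 1 : ℕ) : ℚ) - 1)) * X i ^ (k + 1) := by
          push_cast
          rw [← map_ofNat (C : ℚ →+* MvPolynomial (Fin 2) ℚ) 2, ← map_mul, ← map_add]
          ring_nf

private lemma key (a : ℚ) (k j : ℕ) :
    ((X 0 + X 1) * (C a * X 0 ^ k * X 1 ^ j) : MvPolynomial (Fin 2) ℚ) +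
      3 * (X 0 * X 1) *
        (pderiv 0 (C a * X 0 ^ k * X 1 ^ j) + pderiv 1 (C a * X 0 ^ k * X 1 ^ j)) +
      (X 0 * X 1) *
        (X 0 * pderiv 0 (pderiv 0 (C a * X 0 ^ k * X 1 ^ j)) +
          X 1 * pderiv 1 (pderiv 1 (C a * X 0 ^ k * X 1 ^ j))) =
      C (((k : ℚ) + 1) ^ 2 * a) * X 0 ^ k * X 1 ^ (j + 1) +
        C (((j : ℚ) + 1) ^ 2 * a) * X 0 ^ (k + 1) * X 1 ^ j := by
  have e01 : (0 : Fin 2) ≠ 1 := by decide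
  have pd0 : pderiv 0 (C a * X 0 ^ k * X 1 ^ j : MvPolynomial (Fin 2) ℚ)
      = C a * pderiv 0 (X 0 ^ k) * X 1 ^ j := by
    rw [pderiv_mul, pderiv_mul, pderiv_C, pderiv_X_pow_ne 0 1 e01]
    ring
  have pd1 : pderiv 1 (C a * X 0 ^ k * X 1 ^ j : MvPolynomial (Fin 2) ℚ)
      = C a * X 0 ^ k * pderiv 1 (X 1 ^ j) := by
    rw [pderiv_mul, pderiv_mul, pderiv_C, pderiv_X_pow_ne 1 0 e01.symm]
    ring
  have pd00 : pderiv 0 (C a * pderiv 0 (X 0 ^ k) * X 1 ^ j : MvPolynomial (Fin 2) ℚ)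
      = C a * pderiv 0 (pderiv 0 (X 0 ^ k)) * X 1 ^ j := by
    rw [pderiv_mul, pderiv_mul, pderiv_C, pderiv_X_pow_ne 0 1 e01]
    ring
  have pd11 : pderiv 1 (C a * X 0 ^ k * pderiv 1 (X 1 ^ j) : MvPolynomial (Fin 2) ℚ)
      = C a * X 0 ^ k * pderiv 1 (pderiv 1 (X 1 ^ j)) := by
    rw [pderiv_mul, pderiv_mul, pderiv_C, pderiv_X_pow_ne 1 0 e01.symm]
    ring
  simp only [pd0, pd1, pd00, pd11]
  have h10 := hX1 0 k
  have h11 := hX1 1 j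
  have h20 := hX2 0 k
  have h21 := hX2 1 j
  have expand : (C (((k : ℚ) + 1) ^ 2 * a) : MvPolynomial (Fin 2) ℚ)
      = (C (k:ℚ) ^ 2 + 2 * C (k:ℚ) + 1) * C a := by
    rw [show ((2:MvPolynomial (Fin 2) ℚ)) = C 2 from (map_ofNat _ 2).symm,
      show ((1:MvPolynomial (Fin 2) ℚ)) = C 1 from (map_one _).symm,
      ← map_pow, ← map_mul, ← map_add, ← map_add, ← map_mul]
    ring_nf
  have expand2 : (C (((j : ℚ) + 1) ^ 2 * a) : MvPolynomial (Fin 2) ℚ)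
      = (C (j:ℚ) ^ 2 + 2 * C (j:ℚ) + 1) * C a := by
    rw [show ((2:MvPolynomial (Fin 2) ℚ)) = C 2 from (map_ofNat _ 2).symm,
      show ((1:MvPolynomial (Fin 2) ℚ)) = C 1 from (map_one _).symm,
      ← map_pow, ← map_mul, ← map_add, ← map_add, ← map_mul]
    ring_nf
  have hmul : (C ((k:ℚ) * ((k:ℚ) - 1)) : MvPolynomial (Fin 2) ℚ)
      = C (k:ℚ) ^ 2 - C (k:ℚ) := by
    rw [← map_pow, ← map_sub]; ring_nf
  have hmul2 : (C ((j:ℚ) * ((j:ℚ) - 1)) : MvPolynomial (Fin 2) ℚ)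
      = C (j:ℚ) ^ 2 - C (j:ℚ) := by
    rw [← map_pow, ← map_sub]; ring_nf
  rw [expand, expand2]
  rw [hmul] at h20
  rw [hmul2] at h21
  linear_combination (3 * X 1 * X 1 ^ j * C a) * h10 + (3 * X 0 * X 0 ^ k * C a) * h11 +
    (X 1 * X 1 ^ j * C a) * h20 + (X 0 * X 0 ^ k * C a) * h21

/-- **Differential recurrence for the bivariate (2,1)-Eulerian polynomials.** Let `A(n,k)`
be the `(2,1)`-Eulerian array, defined by `A(1,0) = 1`, `A(n,k) = 0` for `k < 0` or `k ≥ n`,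
and `A(n,k) = (k+1)²·A(n−1,k) + (n−k)²·A(n−1,k−1)` for `n ≥ 2`, `0 ≤ k ≤ n−1`. Then for
every `n ≥ 2`,
`𝒜_n(s,t) = (s+t)·𝒜_{n−1}(s,t) + 3st·(∂_s + ∂_t)𝒜_{n−1}(s,t)
  + st·(s·∂_s² + t·∂_t²)𝒜_{n−1}(s,t)`. -/
theorem biEulerPoly_sq_differential_recurrence
    (A : ℤ → ℤ → ℚ)
    (hA1 : A 1 0 = 1)
    (hA0 : ∀ n k : ℤ, 1 ≤ n → (k < 0 ∨ n ≤ k) → A n k = 0)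
    (hrec : ∀ n k : ℤ, 2 ≤ n → 0 ≤ k → k ≤ n - 1 →
      A n k = ((k : ℚ) + 1) ^ 2 * A (n - 1) k + ((n : ℚ) - (k : ℚ)) ^ 2 * A (n - 1) (k - 1)) :
    ∀ n : ℕ, 2 ≤ n →
      biEulerPoly A n =
        (X 0 + X 1) * biEulerPoly A (n - 1) +
          3 * (X 0 * X 1) *
            (pderiv 0 (biEulerPoly A (n - 1)) + pderiv 1 (biEulerPoly A (n - 1))) +
          (X 0 * X 1) *
            (X 0 * pderiv 0 (pderiv 0 (biEulerPoly A (n - 1))) +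
              X 1 * pderiv 1 (pderiv 1 (biEulerPoly A (n - 1)))) := by
  intro n hn
  obtain ⟨m, rfl⟩ : ∃ m, n = m + 1 := ⟨n - 1, by omega⟩
  have hm : 1 ≤ m := by omega
  simp only [Nat.add_sub_cancel]
  -- Step 1: rewrite the left-hand side via the recurrence
  have step1 : biEulerPoly A (m + 1) =
      ∑ k ∈ Finset.range m,
        (C (((k : ℚ) + 1) ^ 2 * A (m : ℤ) (k : ℤ)) * X 0 ^ k * X 1 ^ (m - k) +
          C (((m : ℚ) - (k : ℚ)) ^ 2 * A (m : ℤ) (k : ℤ)) * X 0 ^ (k + 1) * X 1 ^ (m - 1 - k)) := by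
    rw [biEulerPoly]
    simp only [Nat.add_sub_cancel]
    have hAv : ∀ k ∈ Finset.range (m + 1),
        (C (A ((m + 1 : ℕ) : ℤ) (k : ℤ)) * X 0 ^ k * X 1 ^ (m - k) : MvPolynomial (Fin 2) ℚ) =
          C (((k : ℚ) + 1) ^ 2 * A (m : ℤ) (k : ℤ)) * X 0 ^ k * X 1 ^ (m - k) +
          C (((m : ℚ) + 1 - (k : ℚ)) ^ 2 * A (m : ℤ) ((k : ℤ) - 1)) * X 0 ^ k * X 1 ^ (m - k) := by
      intro k hk
      have hk' : (k : ℤ) ≤ ((m + 1 : ℕ) : ℤ) - 1 := by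
        simp only [Finset.mem_range] at hk; push_cast; omega
      have h := hrec ((m + 1 : ℕ) : ℤ) (k : ℤ) (by push_cast; omega) (by positivity) hk'
      rw [show ((m + 1 : ℕ) : ℤ) - 1 = (m : ℤ) by push_cast; ring] at h
      rw [show (((m + 1 : ℕ) : ℤ) : ℚ) = (m : ℚ) + 1 by push_cast; ring] at h
      push_cast at h ⊢
      rw [h, map_add, add_mul, add_mul]
    rw [Finset.sum_congr rfl hAv, Finset.sum_add_distrib, Finset.sum_range_succ,
      Finset.sum_range_succ']
    have hz1 : A (m : ℤ) (m : ℤ) = 0 := hA0 _ _ (by exact_mod_cast hm) (Or.inr le_rfl)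
    have hz2 : A (m : ℤ) (((0 : ℕ) : ℤ) - 1) = 0 :=
      hA0 _ _ (by exact_mod_cast hm) (Or.inl (by norm_num))
    rw [hz1, hz2]
    simp only [mul_zero, map_zero, zero_mul, add_zero]
    rw [← Finset.sum_add_distrib]
    refine Finset.sum_congr rfl fun k hk => ?_
    have hk' : k < m := Finset.mem_range.mp hk
    have e1 : m - (k + 1) = m - 1 - k := by omega
    have e2 : ((k + 1 : ℕ) : ℤ) - 1 = (k : ℤ) := by push_cast; ring
    have e3 : ((m : ℚ) + 1 - ((k + 1 : ℕ) : ℚ)) = (m : ℚ) - (k : ℚ) := by push_cast; ring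
    rw [e1, e2, e3]
  rw [step1]
  have hS : biEulerPoly A m =
      ∑ k ∈ Finset.range m, C (A (m : ℤ) (k : ℤ)) * X 0 ^ k * X 1 ^ (m - 1 - k) := rfl
  rw [hS]
  trans ∑ k ∈ Finset.range m,
      ((X 0 + X 1) * (C (A (m : ℤ) (k : ℤ)) * X 0 ^ k * X 1 ^ (m - 1 - k)) +
        3 * (X 0 * X 1) *
          (pderiv 0 (C (A (m : ℤ) (k : ℤ)) * X 0 ^ k * X 1 ^ (m - 1 - k)) +
            pderiv 1 (C (A (m : ℤ) (k : ℤ)) * X 0 ^ k * X 1 ^ (m - 1 - k))) +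
        (X 0 * X 1) *
          (X 0 * pderiv 0 (pderiv 0 (C (A (m : ℤ) (k : ℤ)) * X 0 ^ k * X 1 ^ (m - 1 - k))) +
            X 1 * pderiv 1 (pderiv 1 (C (A (m : ℤ) (k : ℤ)) * X 0 ^ k * X 1 ^ (m - 1 - k)))))
  · refine Finset.sum_congr rfl fun k hk => ?_
    have hk' : k < m := Finset.mem_range.mp hk
    have hkey := key (A (m : ℤ) (k : ℤ)) k (m - 1 - k)
    rw [show m - 1 - k + 1 = m - k from by omega] at hkey
    have hc : (((m - 1 - k : ℕ) : ℚ) + 1) = (m : ℚ) - (k : ℚ) := by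
      rw [show m - 1 - k = m - (1 + k) from by omega, Nat.cast_sub (by omega)]
      push_cast; ring
    rw [hc] at hkey
    exact hkey.symm
  · simp only [Finset.sum_add_distrib, ← Finset.mul_sum, ← map_sum]
end

section
/- For every n ≥ 2, the polynomial 𝒜_n^{(2)}(t) = Σ_{k=0}^{n−1} A^{(2)}(n,k)·t^k is gamma-positive: there exist nonnegative real numbers γ_0, γ_1, …, γ_{⌊(n−1)/2⌋} such that Σ_{k=0}^{n−1} A^{(2)}(n,k)·t^k = Σ_{i=0}^{⌊(n−1)/2⌋} γ_i·t^i·(1+t)^{n−1−2i} as polynomials in t. -/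
open Polynomial Finset

noncomputable def Mop (ν : ℝ) (q : ℝ[X]) : ℝ[X] :=
  (1 + C ((ν-1)^2) * X) * q + (C 3 * X - C (2*ν-3) * X^2) * derivative q
    + (X^2 + X^3) * derivative (derivative q)

lemma Mop_sum (ν : ℝ) (s : Finset ℕ) (f : ℕ → ℝ) (g : ℕ → ℝ[X]) :
    Mop ν (∑ i ∈ s, C (f i) * g i) = ∑ i ∈ s, C (f i) * Mop ν (g i) := by
  simp only [Mop, derivative_sum, derivative_C_mul, Finset.mul_sum]
  rw [← Finset.sum_add_distrib, ← Finset.sum_add_distrib]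
  exact Finset.sum_congr rfl fun i _ => by ring

lemma Mop_mono (n k : ℕ) :
    Mop ((n:ℝ)+1) (X^k) = C (((k:ℝ)+1)^2) * X^k + C (((n:ℝ) - (k:ℝ))^2) * X^(k+1) := by
  match k with
  | 0 =>
    simp only [Mop, pow_zero, derivative_one, derivative_zero]
    simp only [map_sub, map_mul, map_ofNat, map_one, map_add, map_pow, C_eq_natCast]
    push_cast; ring
  | 1 =>
    simp only [Mop, pow_one, derivative_X, derivative_one, derivative_zero]
    simp only [map_sub, map_mul, map_ofNat, map_one, map_add, map_pow, C_eq_natCast]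
    push_cast; ring
  | (k+2) =>
    simp only [Mop, derivative_X_pow, Nat.add_sub_cancel, derivative_C_mul]
    push_cast
    simp only [map_add, map_sub, map_mul, map_pow, map_ofNat, map_one, C_eq_natCast]
    ring

noncomputable def bet (i e : ℕ) : ℝ := (e:ℝ) * (4*(i:ℝ) + (e:ℝ) + 5)

lemma bet_nonneg (i e : ℕ) : 0 ≤ bet i e := by unfold bet; positivity

lemma Mop_basis (i e : ℕ) :
    Mop ((2*i+e+2 : ℕ) : ℝ) (X^i * (1+X)^e)
      = C (((i:ℝ)+1)^2) * (X^i * (1+X)^(e+1))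
        + C (bet i e) * (X^(i+1) * (1+X)^(e-1)) := by
  rcases i with _|_|i <;> rcases e with _|_|e <;>
  · simp only [Mop, bet, derivative_mul, derivative_pow, derivative_X_pow,
      Nat.add_sub_cancel, Nat.sub_self, Nat.zero_sub, derivative_add, derivative_one,
      derivative_X, derivative_natCast, derivative_C_mul, derivative_ofNat, derivative_C,
      zero_add, add_zero, mul_one, mul_zero, zero_mul, pow_zero, pow_one,
      derivative_zero]
    simp only [map_sub, map_mul, map_ofNat, map_one, map_add, map_pow, C_eq_natCast]
    push_cast; ring

noncomputable def gnext (γ : ℕ → ℝ) (n : ℕ) : ℕ → ℝ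
  | 0 => γ 0 * ((0:ℝ)+1)^2
  | (i+1) => γ (i+1) * (((i+1:ℕ):ℝ)+1)^2 + γ i * bet i (n-1-2*i)

lemma sum_shift (q1 : ℕ) (F h1 h2 : ℕ → ℝ[X])
    (hF0 : F 0 = h1 0) (hFs : ∀ i, F (i+1) = h1 (i+1) + h2 i) (htop : h1 q1 = 0) :
    ∑ j ∈ Finset.range (q1+1), F j = ∑ i ∈ Finset.range q1, (h1 i + h2 i) := by
  rw [Finset.sum_range_succ' F q1, hF0]
  simp only [hFs]
  rw [Finset.sum_add_distrib, Finset.sum_add_distrib]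
  have : ∑ i ∈ Finset.range q1, h1 (i+1) + h1 0 = ∑ i ∈ Finset.range (q1+1), h1 i :=
    (Finset.sum_range_succ' h1 q1).symm
  rw [add_right_comm, this, Finset.sum_range_succ, htop, add_zero]

section
variable (A : ℤ → ℤ → ℝ)

theorem pstep
    (hA0 : ∀ n k : ℤ, 1 ≤ n → (k < 0 ∨ n ≤ k) → A n k = 0)
    (hrec : ∀ n k : ℤ, 2 ≤ n → 0 ≤ k → k ≤ n - 1 →
      A n k = ((k : ℝ) + 1) ^ 2 * A (n - 1) k + ((n : ℝ) - (k : ℝ)) ^ 2 * A (n - 1) (k - 1))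
    (n : ℕ) (hn : 1 ≤ n) :
    (∑ k ∈ range (n+1), C (A ((n:ℤ)+1) (k:ℤ)) * X^k)
      = Mop ((n:ℝ)+1) (∑ k ∈ range n, C (A (n:ℤ) (k:ℤ)) * X^k) := by
  have hr : ∀ k : ℕ, k < n+1 →
      A ((n:ℤ)+1) (k:ℤ)
        = ((k:ℝ)+1)^2 * A (n:ℤ) (k:ℤ) + (((n:ℝ)+1) - (k:ℝ))^2 * A (n:ℤ) ((k:ℤ)-1) := by
    intro k hk
    have h := hrec ((n:ℤ)+1) (k:ℤ) (by omega) (by omega) (by omega)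
    simpa using h
  calc (∑ k ∈ range (n+1), C (A ((n:ℤ)+1) (k:ℤ)) * X^k)
      = ∑ k ∈ range (n+1),
          (C (((k:ℝ)+1)^2 * A (n:ℤ) (k:ℤ)) * X^k
            + C ((((n:ℝ)+1) - (k:ℝ))^2 * A (n:ℤ) ((k:ℤ)-1)) * X^k) := by
        refine Finset.sum_congr rfl fun k hk => ?_
        rw [hr k (Finset.mem_range.mp hk), C_add, add_mul]
    _ = (∑ k ∈ range (n+1), C (((k:ℝ)+1)^2 * A (n:ℤ) (k:ℤ)) * X^k)
        + ∑ k ∈ range (n+1), C ((((n:ℝ)+1) - (k:ℝ))^2 * A (n:ℤ) ((k:ℤ)-1)) * X^k := by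
        rw [Finset.sum_add_distrib]
    _ = (∑ k ∈ range n, C (((k:ℝ)+1)^2 * A (n:ℤ) (k:ℤ)) * X^k)
        + ∑ k ∈ range n, C ((((n:ℝ)+1) - ((k:ℝ)+1))^2 * A (n:ℤ) (k:ℤ)) * X^(k+1) := by
        rw [Finset.sum_range_succ, Finset.sum_range_succ']
        rw [hA0 (n:ℤ) (n:ℤ) (by omega) (Or.inr le_rfl)]
        rw [show ((0:ℕ):ℤ) - 1 = -1 by simp]
        rw [hA0 (n:ℤ) (-1) (by omega) (Or.inl (by omega))]
        simp only [mul_zero, map_zero, zero_mul, add_zero]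
        congr 1
        refine Finset.sum_congr rfl fun k _ => ?_
        simp only [Nat.cast_add, Nat.cast_one, add_sub_cancel_right]
    _ = Mop ((n:ℝ)+1) (∑ k ∈ range n, C (A (n:ℤ) (k:ℤ)) * X^k) := by
        rw [Mop_sum]
        rw [← Finset.sum_add_distrib]
        refine Finset.sum_congr rfl fun k hk => ?_
        rw [Mop_mono]
        simp only [C_mul]
        ring

theorem main_aux
    (hA1 : A 1 0 = 1)
    (hA0 : ∀ n k : ℤ, 1 ≤ n → (k < 0 ∨ n ≤ k) → A n k = 0)
    (hrec : ∀ n k : ℤ, 2 ≤ n → 0 ≤ k → k ≤ n - 1 →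
      A n k = ((k : ℝ) + 1) ^ 2 * A (n - 1) k + ((n : ℝ) - (k : ℝ)) ^ 2 * A (n - 1) (k - 1)) :
    ∀ n : ℕ, 1 ≤ n → ∃ γ : ℕ → ℝ, (∀ i, 0 ≤ γ i) ∧ (∀ i, (n-1)/2 < i → γ i = 0) ∧
      (∑ k ∈ range n, C (A (n:ℤ) (k:ℤ)) * X^k)
        = ∑ i ∈ range ((n-1)/2 + 1), C (γ i) * (X^i * (1+X)^(n-1-2*i)) := by
  intro n
  induction n with
  | zero => omega
  | succ n ih =>
    intro _
    rcases Nat.eq_zero_or_pos n with hn0 | hn1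
    · subst hn0
      refine ⟨fun i => if i = 0 then 1 else 0, fun i => ?_, fun i hi => ?_, ?_⟩
      · by_cases h : i = 0 <;> simp [h]
      · simp [show i ≠ 0 from by omega]
      · simp [hA1]
    · obtain ⟨γ, hpos, hz, hP⟩ := ih hn1
      set q1 := (n-1)/2 + 1 with hq1
      have hz' : ∀ j, n/2 < j → gnext γ n j = 0 := by
        intro j hj
        cases j with
        | zero => omega
        | succ i =>
          simp only [gnext]
          have hg1 : γ (i+1) = 0 := hz _ (by omega)
          by_cases hc : (n-1)/2 < i
          · rw [hg1, hz i hc]; ring_nf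
          · have he : n - 1 - 2*i = 0 := by omega
            rw [hg1, he]; simp [bet]
      refine ⟨gnext γ n, ?_, ?_, ?_⟩
      · intro j
        cases j with
        | zero => simp only [gnext]; exact mul_nonneg (hpos 0) (by positivity)
        | succ i =>
          have hb := bet_nonneg i (n-1-2*i)
          have h1 := hpos (i+1); have h2 := hpos i
          simp only [gnext]
          positivity
      · intro j hj
        simp only [Nat.add_sub_cancel] at hj
        exact hz' j (by omega)
      · simp only [Nat.add_sub_cancel]
        have hcast : ((n:ℕ):ℤ) + 1 = (((n+1:ℕ)):ℤ) := by push_cast; ring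
        rw [show ∑ k ∈ range (n+1), C (A ((n+1:ℕ):ℤ) (k:ℤ)) * X^k
              = ∑ k ∈ range (n+1), C (A ((n:ℤ)+1) (k:ℤ)) * X^k from by rw [hcast]]
        rw [pstep A hA0 hrec n hn1, hP, Mop_sum]
        have key : ∀ i ∈ range q1,
            C (γ i) * Mop ((n:ℝ)+1) (X^i * (1+X)^(n-1-2*i))
              = (C (γ i * ((i:ℝ)+1)^2) * (X^i * (1+X)^(n-2*i))
                 + C (γ i * bet i (n-1-2*i)) * (X^(i+1) * (1+X)^(n-2*(i+1)))) := by
          intro i hi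
          have hile : 2*i ≤ n-1 := by
            have := Finset.mem_range.mp hi; omega
          have hb := Mop_basis i (n-1-2*i)
          rw [show ((2*i + (n-1-2*i) + 2 : ℕ):ℝ) = (n:ℝ)+1 from by
            rw [show 2*i + (n-1-2*i) + 2 = n+1 from by omega]; push_cast; ring] at hb
          rw [hb, show n-1-2*i+1 = n-2*i from by omega,
              show n-1-2*i-1 = n-2*(i+1) from by omega]
          simp only [C_mul]
          ring
        rw [Finset.sum_congr rfl key]
        have htop : C (γ q1 * ((q1:ℝ)+1)^2) * (X^q1 * (1+X)^(n-2*q1)) = 0 := by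
          rw [hz q1 (by omega)]; simp
        have hshift := sum_shift q1
          (fun j => C (gnext γ n j) * (X^j * (1+X)^(n-2*j)))
          (fun i => C (γ i * ((i:ℝ)+1)^2) * (X^i * (1+X)^(n-2*i)))
          (fun i => C (γ i * bet i (n-1-2*i)) * (X^(i+1) * (1+X)^(n-2*(i+1))))
          (by norm_num [gnext])
          (fun i => by
            simp only [gnext, C_add, add_mul])
          htop
        rw [← hshift]
        rcases (show n/2 + 1 = q1 + 1 ∨ n/2 + 1 = q1 from by omega) with h | h
        · rw [h]
        · rw [h, Finset.sum_range_succ, hz' q1 (by omega)]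
          simp
end


/-- **Gamma-positivity of the (2,1)-Eulerian polynomials.** Let `A(n,k)` be the
`(2,1)`-Eulerian array, defined by `A(1,0) = 1`, `A(n,k) = 0` for `k < 0` or `k ≥ n`, and
`A(n,k) = (k+1)²·A(n−1,k) + (n−k)²·A(n−1,k−1)` for `n ≥ 2`, `0 ≤ k ≤ n−1`. Then for every
`n ≥ 2` the polynomial `Σ_{k=0}^{n−1} A(n,k)·t^k` is gamma-positive: there are nonnegative
reals `γ_0,…,γ_{⌊(n−1)/2⌋}` with
`Σ_{k=0}^{n−1} A(n,k)·t^k = Σ_{i=0}^{⌊(n−1)/2⌋} γ_i·t^i·(1+t)^(n−1−2i)`. -/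
theorem sq_eulerian_gamma_positive
    (A : ℤ → ℤ → ℝ)
    (hA1 : A 1 0 = 1)
    (hA0 : ∀ n k : ℤ, 1 ≤ n → (k < 0 ∨ n ≤ k) → A n k = 0)
    (hrec : ∀ n k : ℤ, 2 ≤ n → 0 ≤ k → k ≤ n - 1 →
      A n k = ((k : ℝ) + 1) ^ 2 * A (n - 1) k + ((n : ℝ) - (k : ℝ)) ^ 2 * A (n - 1) (k - 1)) :
    ∀ n : ℕ, 2 ≤ n → ∃ γ : ℕ → ℝ, (∀ i, 0 ≤ γ i) ∧
      (∑ k ∈ Finset.range n, Polynomial.C (A (n : ℤ) (k : ℤ)) * Polynomial.X ^ k) =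
        ∑ i ∈ Finset.range ((n - 1) / 2 + 1),
          Polynomial.C (γ i) * Polynomial.X ^ i * (1 + Polynomial.X) ^ (n - 1 - 2 * i) := by
  intro n hn
  obtain ⟨γ, hpos, _, hP⟩ := main_aux A hA1 hA0 hrec n (by omega)
  refine ⟨γ, hpos, ?_⟩
  rw [hP]
  exact Finset.sum_congr rfl fun i _ => by rw [mul_assoc]
end
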